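/- arXiv:1512.02685 — 7 statements merged into one kernel-verified Lean document; each statement's English description precedes it below -/
import Mathlib

section
/- Let q = 2 and n ≥ 2. In the rational function field F_2(t), the identity Σ_{k=0}^{n-2} (1/D_{n-k})^{2^k} · (1/L_k) = [n-1] / (L_n · [1]^{2^{n-1}}) holds. -/
/-- `[m] = t^{2^m} - t ∈ F_2[t]`. -/
noncomputable def br (m : ℕ) : Polynomial (ZMod 2) :=
  Polynomial.X ^ (2 ^ m) - Polynomial.X

/-- The Carlitz factorial `D_n`: `D_0 = 1`, `D_n = [n]·D_{n-1}²`. -/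
noncomputable def carlitzD : ℕ → Polynomial (ZMod 2)
  | 0 => 1
  | n + 1 => br (n + 1) * (carlitzD n) ^ 2

/-- The Carlitz factorial `L_n`: `L_0 = 1`, `L_n = [n]·L_{n-1}`. -/
noncomputable def carlitzL : ℕ → Polynomial (ZMod 2)
  | 0 => 1
  | n + 1 => br (n + 1) * carlitzL n

/-!
The sum telescopes: by induction on `k`, its first `k + 1` terms with `n = m + 1 + k` add up to
`1 / (D_m ^ 2 ^ (k + 1) · L_k · [n])`. In characteristic 2 the Frobenius gives
`[m + 1] ^ 2 ^ k = [m + 1 + k] + [k]`, so `D_{m+1} ^ 2 ^ k = ([n] + [k]) · D_m ^ 2 ^ (k + 1)`, and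
adding the next term only uses `1 / [n] + 1 / [k] = ([n] + [k]) / ([n] · [k])`.
-/

open scoped Polynomial

local notation "φ" => algebraMap (ZMod 2)[X] (RatFunc (ZMod 2))

lemma br_ne_zero {m : ℕ} (hm : m ≠ 0) : br m ≠ 0 :=
  FiniteField.X_pow_card_pow_sub_X_ne_zero _ hm one_lt_two

lemma carlitzD_ne_zero (n : ℕ) : carlitzD n ≠ 0 := by
  induction n with
  | zero => exact one_ne_zero
  | succ n ih => exact mul_ne_zero (br_ne_zero n.succ_ne_zero) (pow_ne_zero _ ih)

lemma carlitzL_ne_zero (n : ℕ) : carlitzL n ≠ 0 := by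
  induction n with
  | zero => exact one_ne_zero
  | succ n ih => exact mul_ne_zero (br_ne_zero n.succ_ne_zero) ih

lemma br_pow_two_pow (a b : ℕ) : br a ^ 2 ^ b = br (a + b) + br b := by
  rw [br, br, br, sub_pow_char_pow, ← pow_mul, ← pow_add, CharTwo.sub_eq_add,
    CharTwo.sub_eq_add]
  ring

lemma carlitzD_succ_pow_two_pow (m k : ℕ) :
    carlitzD (m + 1) ^ 2 ^ k = (br (m + 1 + k) + br k) * carlitzD m ^ 2 ^ (k + 1) := by
  rw [carlitzD, mul_pow, br_pow_two_pow, ← pow_mul, pow_succ']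

lemma sum_range_inv_carlitzD_pow_mul_inv_carlitzL (m k : ℕ) :
    ∑ j ∈ Finset.range (k + 1), (1 / φ (carlitzD (m + 1 + k - j))) ^ 2 ^ j * (1 / φ (carlitzL j)) =
      1 / (φ (carlitzD m) ^ 2 ^ (k + 1) * φ (carlitzL k) * φ (br (m + 1 + k))) := by
  induction k generalizing m with
  | zero => simp [carlitzD, carlitzL, mul_comm]
  | succ k ih =>
    rw [Finset.sum_range_succ, show m + 1 + (k + 1) = m + 1 + 1 + k by ring, ih,
      show m + 1 + 1 + k - (k + 1) = m + 1 by omega, div_pow, one_pow, ← map_pow,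
      carlitzD_succ_pow_two_pow, show m + 1 + (k + 1) = m + 1 + 1 + k by ring, carlitzL, map_mul,
      map_mul, map_pow, map_add]
    have hS : φ (br (m + 1 + 1 + k)) + φ (br (k + 1)) ≠ 0 := by
      rw [← map_add, show m + 1 + 1 + k = m + 1 + (k + 1) by ring, ← br_pow_two_pow]
      exact RatFunc.algebraMap_ne_zero (pow_ne_zero _ (br_ne_zero m.succ_ne_zero))
    have hD : φ (carlitzD m) ≠ 0 := RatFunc.algebraMap_ne_zero (carlitzD_ne_zero m)
    have hL : φ (carlitzL k) ≠ 0 := RatFunc.algebraMap_ne_zero (carlitzL_ne_zero k)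
    have hn : φ (br (m + 1 + 1 + k)) ≠ 0 := RatFunc.algebraMap_ne_zero (br_ne_zero (by omega))
    have hk : φ (br (k + 1)) ≠ 0 := RatFunc.algebraMap_ne_zero (br_ne_zero k.succ_ne_zero)
    field_simp
    ring

/-- (q = 2, n ≥ 2) In `F_2(t)`,
`Σ_{k=0}^{n-2} (1/D_{n-k})^{2^k} · (1/L_k) = [n-1] / (L_n · [1]^{2^{n-1}})`. -/
theorem stmt_5 (n : ℕ) (hn : 2 ≤ n) :
    ∑ k ∈ Finset.range (n - 1),
        (1 / algebraMap (Polynomial (ZMod 2)) (RatFunc (ZMod 2)) (carlitzD (n - k))) ^ (2 ^ k) *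
          (1 / algebraMap (Polynomial (ZMod 2)) (RatFunc (ZMod 2)) (carlitzL k)) =
      algebraMap (Polynomial (ZMod 2)) (RatFunc (ZMod 2)) (br (n - 1)) /
        (algebraMap (Polynomial (ZMod 2)) (RatFunc (ZMod 2)) (carlitzL n) *
          algebraMap (Polynomial (ZMod 2)) (RatFunc (ZMod 2)) (br 1) ^ (2 ^ (n - 1))) := by
  obtain ⟨k, rfl⟩ : ∃ k, n = k + 2 := ⟨n - 2, by omega⟩
  have h := sum_range_inv_carlitzD_pow_mul_inv_carlitzL 1 k
  rw [show 1 + 1 + k = k + 2 by ring] at h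
  rw [show k + 2 - 1 = k + 1 from rfl, h]
  have h1 : φ (br 1) ≠ 0 := RatFunc.algebraMap_ne_zero (br_ne_zero one_ne_zero)
  have hk : φ (br (k + 1)) ≠ 0 := RatFunc.algebraMap_ne_zero (br_ne_zero k.succ_ne_zero)
  have hk2 : φ (br (k + 2)) ≠ 0 := RatFunc.algebraMap_ne_zero (br_ne_zero (k + 1).succ_ne_zero)
  have hL : φ (carlitzL k) ≠ 0 := RatFunc.algebraMap_ne_zero (carlitzL_ne_zero k)
  simp only [carlitzD, carlitzL, one_pow, mul_one, map_mul]
  field_simp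
end

section
/- Let q be a power of a prime p, let d ≥ 1, and let k be a positive multiple of q-1. Then P_d(k) lies in the subfield of F_q(t) generated by t^{q-1} (over the prime subfield), and P_d(k) also lies in the subfield of F_q(t) generated by [1] = t^q - t (over the prime subfield). -/
/-!
Let `f(Y) = ∏_℘ (Y - ℘^k) ∈ F_q[t][Y]`, so that `P_d(k) = f'(1) / f(1)`. A ring automorphism `σ`
of `F_q[t]` preserving degrees permutes the primes of degree `d` up to the unit factors
`σ(℘) / normalize(σ(℘)) ∈ F_q^×`, and these disappear in the `k`-th power because `q - 1 ∣ k`.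
Hence `σ` fixes `f`, and so fixes `f(1)` and `f'(1)`. This applies to `t ↦ c t`, `t ↦ t + a` and
the coefficientwise Frobenius. A polynomial fixed by the first and the last has coefficients in
`F_p` supported in degrees divisible by `q - 1`, so it lies in `F_p[t^{q-1}]`. A polynomial `F`
fixed by the last two satisfies `F - F(0) = [1] G` since `[1] = ∏_{a ∈ F_q} (t - a)`, with `G`
again fixed, so by induction on the degree it lies in `F_p[[1]]`.
-/

/-- `P_d(k) = Σ 1/(1 - ℘^k) ∈ F_q(t)`, the (finite) sum over all monic irreducible
`℘ ∈ F_q[t]` of degree `d`. -/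
noncomputable def Pd (Fq : Type*) [Field Fq] (d k : ℕ) : RatFunc Fq :=
  ∑ᶠ ℘ ∈ {P : Polynomial Fq | P.Monic ∧ Irreducible P ∧ P.natDegree = d},
    (1 - algebraMap (Polynomial Fq) (RatFunc Fq) ℘ ^ k)⁻¹

open Polynomial

theorem Finset.sum_inv_one_sub_eq_eval_derivative_div {L ι : Type*} [Field L] (s : Finset ι)
    (x : ι → L) (hx : ∀ i ∈ s, x i ≠ 1) :
    ∑ i ∈ s, (1 - x i)⁻¹ =
      (derivative (∏ i ∈ s, (X - C (x i)))).eval 1 / (∏ i ∈ s, (X - C (x i))).eval 1 := by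
  classical
  have hne : ∀ i ∈ s, (1 - x i) ≠ 0 := fun i hi => sub_ne_zero.mpr (hx i hi).symm
  simp only [derivative_prod_finset, derivative_sub, derivative_X, derivative_C, sub_zero,
    mul_one, eval_finsetSum, eval_prod, eval_sub, eval_X, eval_C, Finset.sum_div]
  refine Finset.sum_congr rfl fun i hi => ?_
  rw [← Finset.mul_prod_erase s _ hi, div_mul_cancel_right₀ (Finset.prod_ne_zero_iff.mpr
    fun j hj => hne j (Finset.mem_of_mem_erase hj))]

theorem Subring.map_mem_subfieldClosure {R L : Type*} [Ring R] [Field L] (f : R →+* L)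
    {s : Set R} {x : R} (hx : x ∈ Subring.closure s) : f x ∈ Subfield.closure (f '' s) :=
  Subfield.subring_closure_le _ (RingHom.map_closure f s ▸ Subring.mem_map.mpr ⟨x, hx, rfl⟩)

section Field

variable {Fq : Type*} [Field Fq]

variable (Fq) in
def monicIrreducibleOfDegree (d : ℕ) : Set Fq[X] :=
  {P : Fq[X] | P.Monic ∧ Irreducible P ∧ P.natDegree = d}

theorem mapsTo_normalize_ringEquiv_monicIrreducibleOfDegree [DecidableEq Fq] (σ : Fq[X] ≃+* Fq[X])
    (hσ : ∀ P, (σ P).natDegree = P.natDegree) (d : ℕ) :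
    Set.MapsTo (fun P => normalize (σ P)) (monicIrreducibleOfDegree Fq d)
      (monicIrreducibleOfDegree Fq d) := by
  rintro P ⟨-, hirr, hdeg⟩
  have hσP : σ P ≠ 0 := (map_ne_zero_iff σ σ.injective).mpr hirr.ne_zero
  refine ⟨monic_normalize hσP, (normalize_associated _).symm.irreducible
    ((MulEquiv.irreducible_iff σ.toMulEquiv).mpr hirr), ?_⟩
  rw [natDegree_eq_of_degree_eq degree_normalize, hσ, hdeg]

theorem injOn_normalize_ringEquiv_monic [DecidableEq Fq] (σ : Fq[X] ≃+* Fq[X]) :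
    Set.InjOn (fun P => normalize (σ P)) {P : Fq[X] | P.Monic} := by
  intro P hP Q hQ h
  have hσ : Associated (σ P) (σ Q) := normalize_eq_normalize_iff_associated.mp h
  refine eq_of_monic_of_associated hP hQ ?_
  simpa using hσ.map σ.symm

variable (Fq) in
def IsDegreeAutInvariant (F : Fq[X]) : Prop :=
  ∀ σ : Fq[X] ≃+* Fq[X], (∀ P, (σ P).natDegree = P.natDegree) → σ F = F

theorem IsDegreeAutInvariant.comp_C_mul_X_add_C {F : Fq[X]} (hF : IsDegreeAutInvariant Fq F)
    (c : Fqˣ) (a : Fq) :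
    F.comp (C (c : Fq) * X + C a) = F :=
  hF (algEquivCMulXAddC (c : Fq) a).toRingEquiv fun P => by
    rw [AlgEquiv.coe_ringEquiv, algEquivCMulXAddC_apply, ← comp_eq_aeval, natDegree_comp,
      natDegree_linear c.ne_zero, mul_one]

theorem C_coeff_mem_subringClosure (p : ℕ) [Fact p.Prime] [CharP Fq p] {F : Fq[X]}
    (hF : F.map (frobenius Fq p) = F) (n : ℕ) (s : Set Fq[X]) :
    C (F.coeff n) ∈ Subring.closure s := by
  have hn : F.coeff n ∈ (⊥ : Subfield Fq) :=
    (Subfield.mem_bot_iff_pow_eq_self Fq p).mpr <| by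
      simpa [frobenius_def] using congrArg (coeff · n) hF
  obtain ⟨m, hm⟩ := (mem_bot_iff_intCast p Fq).mp hn
  rw [← hm, map_intCast]
  exact intCast_mem _ m

end Field

section FiniteField

variable {Fq : Type*} [Field Fq] [Fintype Fq]

theorem FiniteField.monic_pow_of_card_sub_one_dvd {P : Fq[X]} (hP : P ≠ 0) {k : ℕ}
    (hk : Fintype.card Fq - 1 ∣ k) : (P ^ k).Monic := by
  obtain ⟨j, rfl⟩ := hk
  rw [Monic, leadingCoeff_pow, pow_mul,
    FiniteField.pow_card_sub_one_eq_one _ (leadingCoeff_ne_zero.mpr hP), one_pow]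

theorem FiniteField.normalize_pow_of_card_sub_one_dvd [DecidableEq Fq] (P : Fq[X]) {k : ℕ}
    (hk : Fintype.card Fq - 1 ∣ k) : normalize P ^ k = P ^ k := by
  rcases eq_or_ne P 0 with rfl | hP
  · simp
  rw [← (monic_pow_of_card_sub_one_dvd hP hk).normalize_eq_self]
  exact (map_pow normalizeHom P k).symm

theorem FiniteField.X_pow_card_sub_X_comp_X_add_C (a : Fq) :
    (X ^ Fintype.card Fq - X : Fq[X]).comp (X + C a) = X ^ Fintype.card Fq - X := by
  rw [sub_comp, pow_comp, X_comp, ← FiniteField.expand_card, map_add, expand_X, expand_C]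
  ring

theorem FiniteField.X_pow_card_sub_X_dvd_sub_C_eval_zero {F : Fq[X]}
    (htr : ∀ a : Fq, F.comp (X + C a) = F) :
    X ^ Fintype.card Fq - X ∣ F - C (F.eval 0) := by
  rcases eq_or_ne (F - C (F.eval 0)) 0 with h | h
  · exact h ▸ dvd_zero _
  have hsplits : (X ^ Fintype.card Fq - X : Fq[X]).Splits := by
    rw [splits_iff_card_roots, FiniteField.roots_X_pow_card_sub_X,
      FiniteField.X_pow_card_sub_X_natDegree_eq _ Fintype.one_lt_card]
    rfl
  refine hsplits.dvd_of_roots_le_roots (FiniteField.X_pow_card_sub_X_ne_zero _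
    Fintype.one_lt_card) ?_
  rw [FiniteField.roots_X_pow_card_sub_X, Multiset.le_iff_subset Finset.univ.nodup]
  intro a _
  have hFa : F.eval a = F.eval 0 := by simpa [eval_comp] using congrArg (eval 0) (htr a)
  rw [mem_roots h, IsRoot, eval_sub, eval_C, hFa, sub_self]

variable (Fq) in
theorem finite_monicIrreducibleOfDegree (d : ℕ) : (monicIrreducibleOfDegree Fq d).Finite := by
  have : Finite (degreeLT Fq (d + 1)) := .of_equiv _ (degreeLTEquiv Fq (d + 1)).toEquiv.symm
  refine (degreeLT Fq (d + 1) : Set Fq[X]).toFinite.subset fun P ⟨_, _, hP⟩ => ?_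
  rw [SetLike.mem_coe, mem_degreeLT]
  exact degree_le_natDegree.trans_lt (by rw [hP]; exact_mod_cast d.lt_succ_self)

variable (Fq) in
noncomputable def primePowPoly (d k : ℕ) : Fq[X][X] :=
  ∏ ℘ ∈ (finite_monicIrreducibleOfDegree Fq d).toFinset, (X - C (℘ ^ k))

theorem Pd_eq_div {d k : ℕ} (hd : 1 ≤ d) (hk : 0 < k) :
    Pd Fq d k = algebraMap Fq[X] (RatFunc Fq) ((derivative (primePowPoly Fq d k)).eval 1) /
      algebraMap Fq[X] (RatFunc Fq) ((primePowPoly Fq d k).eval 1) := by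
  set μ := algebraMap Fq[X] (RatFunc Fq)
  have hpow_ne_one : ∀ ℘ ∈ monicIrreducibleOfDegree Fq d, μ ℘ ^ k ≠ 1 := by
    rintro ℘ ⟨-, -, hdeg⟩ h
    rw [← map_pow, ← map_one μ, (IsFractionRing.injective Fq[X] (RatFunc Fq)).eq_iff] at h
    have := congrArg natDegree h
    rw [natDegree_pow, hdeg, natDegree_one] at this
    exact Nat.mul_ne_zero hk.ne' (by omega) this
  rw [Pd, ← monicIrreducibleOfDegree, finsum_mem_eq_finite_toFinset_sum _
    (finite_monicIrreducibleOfDegree Fq d), Finset.sum_inv_one_sub_eq_eval_derivative_div _ _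
    fun ℘ h℘ => hpow_ne_one ℘ ((Set.Finite.mem_toFinset _).mp h℘), ← eval_one_map,
    ← eval_one_map, ← derivative_map, primePowPoly]
  simp only [Polynomial.map_prod, Polynomial.map_sub, map_X, Polynomial.map_C, Polynomial.map_pow,
    map_pow]

theorem map_primePowPoly (σ : Fq[X] ≃+* Fq[X]) (hσ : ∀ P, (σ P).natDegree = P.natDegree)
    (d : ℕ) {k : ℕ} (hk : Fintype.card Fq - 1 ∣ k) :
    (primePowPoly Fq d k).map (σ : Fq[X] →+* Fq[X]) = primePowPoly Fq d k := by
  classical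
  have hfin := finite_monicIrreducibleOfDegree Fq d
  have hmaps := mapsTo_normalize_ringEquiv_monicIrreducibleOfDegree σ hσ d
  have hbij := (hfin.injOn_iff_bijOn_of_mapsTo hmaps).mp
    ((injOn_normalize_ringEquiv_monic σ).mono fun P hP => hP.1)
  rw [primePowPoly, Polynomial.map_prod]
  refine Finset.prod_nbij (fun P => normalize (σ P)) (fun P hP => ?_) ?_ ?_ fun P _ => ?_
  · simpa using hmaps (hfin.mem_toFinset.mp hP)
  · simpa using hbij.injOn
  · simpa using hbij.surjOn
  · simp [FiniteField.normalize_pow_of_card_sub_one_dvd _ hk]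

theorem isDegreeAutInvariant_eval_one_primePowPoly (d : ℕ) {k : ℕ}
    (hk : Fintype.card Fq - 1 ∣ k) : IsDegreeAutInvariant Fq ((primePowPoly Fq d k).eval 1) :=
  fun σ hσ => by
    rw [← RingEquiv.coe_toRingHom, ← eval_one_map, map_primePowPoly σ hσ d hk]

theorem isDegreeAutInvariant_eval_one_derivative_primePowPoly (d : ℕ) {k : ℕ}
    (hk : Fintype.card Fq - 1 ∣ k) :
    IsDegreeAutInvariant Fq ((derivative (primePowPoly Fq d k)).eval 1) :=
  fun σ hσ => by
    rw [← RingEquiv.coe_toRingHom, ← eval_one_map, ← derivative_map, map_primePowPoly σ hσ d hk]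

theorem IsDegreeAutInvariant.map_frobenius {F : Fq[X]} (hF : IsDegreeAutInvariant Fq F) (p : ℕ)
    [Fact p.Prime] [CharP Fq p] :
    F.map (frobenius Fq p) = F :=
  hF (mapEquiv (frobeniusEquiv Fq p)) fun _ => natDegree_map _

section PrimeField

variable (p : ℕ) [Fact p.Prime] [CharP Fq p] {F : Fq[X]}

theorem mem_subringClosure_X_pow_card_sub_one (hdil : ∀ c : Fqˣ, F.comp (C (c : Fq) * X) = F)
    (hF : F.map (frobenius Fq p) = F) :
    F ∈ Subring.closure {(X : Fq[X]) ^ (Fintype.card Fq - 1)} := by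
  rw [F.as_sum_range_C_mul_X_pow]
  refine Subring.sum_mem _ fun n _ => ?_
  by_cases hn : F.coeff n = 0
  · rw [hn, map_zero, zero_mul]
    exact zero_mem _
  obtain ⟨j, rfl⟩ : Fintype.card Fq - 1 ∣ n := by
    refine (FiniteField.forall_pow_eq_one_iff Fq n).mp fun c => Units.ext ?_
    have := congrArg (coeff · n) (hdil c)
    simp only [comp_C_mul_X_coeff] at this
    rw [Units.val_pow_eq_pow_val, Units.val_one]
    exact mul_left_cancel₀ hn (this.trans (mul_one _).symm)
  rw [pow_mul]
  exact mul_mem (C_coeff_mem_subringClosure p hF _ _)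
    (pow_mem (Subring.subset_closure (Set.mem_singleton _)) j)

theorem mem_subringClosure_X_pow_card_sub_X (htr : ∀ a : Fq, F.comp (X + C a) = F)
    (hF : F.map (frobenius Fq p) = F) :
    F ∈ Subring.closure {(X : Fq[X]) ^ Fintype.card Fq - X} := by
  have hq : 1 < Fintype.card Fq := Fintype.one_lt_card
  have hΦ0 := FiniteField.X_pow_card_sub_X_ne_zero Fq hq
  induction hn : F.natDegree using Nat.strong_induction_on generalizing F with
  | _ n ih =>
  obtain ⟨G, hG⟩ := FiniteField.X_pow_card_sub_X_dvd_sub_C_eval_zero htr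
  have hF0 : frobenius Fq p (F.eval 0) = F.eval 0 := by
    simpa [coeff_zero_eq_eval_zero] using congrArg (coeff · 0) hF
  rw [eq_add_of_sub_eq' hG]
  refine add_mem ?_ (mul_mem (Subring.subset_closure (Set.mem_singleton _)) ?_)
  · simpa [coeff_zero_eq_eval_zero] using C_coeff_mem_subringClosure p hF 0 _
  rcases eq_or_ne G 0 with rfl | hG0
  · exact zero_mem _
  have hGtr : ∀ a : Fq, G.comp (X + C a) = G := fun a => mul_left_cancel₀ hΦ0 <| by
    conv_lhs => rw [← FiniteField.X_pow_card_sub_X_comp_X_add_C a, ← mul_comp, ← hG]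
    rw [sub_comp, C_comp, htr, hG]
  have hGF : G.map (frobenius Fq p) = G := mul_left_cancel₀ hΦ0 <| by
    have hΦF : (X ^ Fintype.card Fq - X : Fq[X]).map (frobenius Fq p) =
        X ^ Fintype.card Fq - X := by simp
    conv_lhs => rw [← hΦF, ← Polynomial.map_mul, ← hG]
    rw [Polynomial.map_sub, map_C, hF, hF0, hG]
  have hdeg := congrArg natDegree hG
  rw [natDegree_sub_C, natDegree_mul hΦ0 hG0,
    FiniteField.X_pow_card_sub_X_natDegree_eq _ hq] at hdeg
  exact ih G.natDegree (by omega) hGtr hGF rfl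

end PrimeField

namespace IsDegreeAutInvariant

variable {F : Fq[X]}

theorem algebraMap_mem_closure_X_pow_card_sub_one (hF : IsDegreeAutInvariant Fq F) :
    algebraMap Fq[X] (RatFunc Fq) F ∈
      Subfield.closure {(RatFunc.X : RatFunc Fq) ^ (Fintype.card Fq - 1)} := by
  obtain ⟨p, _⟩ := CharP.exists Fq
  have : Fact p.Prime := ⟨CharP.char_is_prime Fq p⟩
  have hdil (c : Fqˣ) : F.comp (C (c : Fq) * X) = F := by
    simpa using hF.comp_C_mul_X_add_C c 0
  simpa using Subring.map_mem_subfieldClosure (algebraMap Fq[X] (RatFunc Fq))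
    (mem_subringClosure_X_pow_card_sub_one p hdil (hF.map_frobenius p))

theorem algebraMap_mem_closure_X_pow_card_sub_X (hF : IsDegreeAutInvariant Fq F) :
    algebraMap Fq[X] (RatFunc Fq) F ∈
      Subfield.closure {(RatFunc.X : RatFunc Fq) ^ Fintype.card Fq - RatFunc.X} := by
  obtain ⟨p, _⟩ := CharP.exists Fq
  have : Fact p.Prime := ⟨CharP.char_is_prime Fq p⟩
  have htr (a : Fq) : F.comp (X + C a) = F := by
    simpa using hF.comp_C_mul_X_add_C 1 a
  simpa using Subring.map_mem_subfieldClosure (algebraMap Fq[X] (RatFunc Fq))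
    (mem_subringClosure_X_pow_card_sub_X p htr (hF.map_frobenius p))

end IsDegreeAutInvariant

end FiniteField

/-- For `d ≥ 1` and `k` a positive multiple of `q - 1`, `P_d(k)` lies both in the subfield
of `F_q(t)` generated by `t^{q-1}` and in the subfield generated by `[1] = t^q - t`. -/
theorem stmt_8 (Fq : Type*) [Field Fq] [Fintype Fq] (d k : ℕ) (hd : 1 ≤ d) (hk : 0 < k)
    (hdvd : Fintype.card Fq - 1 ∣ k) :
    Pd Fq d k ∈ Subfield.closure {(RatFunc.X : RatFunc Fq) ^ (Fintype.card Fq - 1)} ∧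
    Pd Fq d k ∈ Subfield.closure
      {(RatFunc.X : RatFunc Fq) ^ Fintype.card Fq - RatFunc.X} := by
  have hnum := isDegreeAutInvariant_eval_one_derivative_primePowPoly (Fq := Fq) d hdvd
  have hden := isDegreeAutInvariant_eval_one_primePowPoly (Fq := Fq) d hdvd
  rw [Pd_eq_div hd hk]
  exact ⟨div_mem hnum.algebraMap_mem_closure_X_pow_card_sub_one
      hden.algebraMap_mem_closure_X_pow_card_sub_one,
    div_mem hnum.algebraMap_mem_closure_X_pow_card_sub_X
      hden.algebraMap_mem_closure_X_pow_card_sub_X⟩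
end

section
/- Let q be a power of a prime p, let d ≥ 1, and let k be a positive multiple of q-1. If P_d(k) ≠ 0, then the valuation at infinity p_d(k) of P_d(k) is divisible by q(q-1) and satisfies p_d(k) ≥ kd. -/
/-!
`P_d(k)` is fixed by every `F_q`-automorphism `p(t) ↦ p(ct + a)` of `F_q[t]`: such a map
permutes the monic irreducibles of degree `d` up to the factor `c^d`, which disappears in `℘^k`
because `q - 1 ∣ k`. Write `P_d(k) = N / D` in lowest terms with `D` monic. Translations keep
`D` monic, so they fix `N` and `D` themselves, and a translation-invariant polynomial is a
polynomial in `t^q - t`; hence `q` divides `deg N - deg D`. Under `t ↦ ζ t` the leading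
coefficients give `ζ^(deg N) = ζ^(deg D)`, and for a generator `ζ` of `F_qˣ` this means
`q - 1 ∣ deg N - deg D`. The bound `p_d(k) ≥ kd` is the ultrametric inequality: every summand
has valuation `kd`.
-/

open Polynomial IsFractionRing

namespace Polynomial

theorem algEquiv_apply_eq_comp {R : Type*} [CommRing R] (σ : R[X] ≃ₐ[R] R[X]) (p : R[X]) :
    σ p = p.comp (σ X) := by
  rw [comp_eq_aeval, aeval_algHom_apply, aeval_X_left_apply]

section Domain

variable {R : Type*} [CommRing R] [IsDomain R] (σ : R[X] ≃ₐ[R] R[X])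

theorem natDegree_algEquiv_X : (σ X).natDegree = 1 := by
  have h := congrArg natDegree (σ.apply_symm_apply X)
  rw [algEquiv_apply_eq_comp, natDegree_comp, natDegree_X] at h
  exact Nat.eq_one_of_mul_eq_one_left h

theorem natDegree_algEquiv (p : R[X]) : (σ p).natDegree = p.natDegree := by
  rw [algEquiv_apply_eq_comp, natDegree_comp, natDegree_algEquiv_X, mul_one]

theorem leadingCoeff_algEquiv (p : R[X]) :
    (σ p).leadingCoeff = p.leadingCoeff * (σ X).leadingCoeff ^ p.natDegree := by
  rw [algEquiv_apply_eq_comp, leadingCoeff_comp (by simp [natDegree_algEquiv_X])]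

theorem eq_and_eq_of_mul_eq_mul_of_isCoprime {N D N' D' : R[X]} (h : IsCoprime N D)
    (h' : IsCoprime N' D') (hD : D.Monic) (hD' : D'.Monic) (heq : N' * D = N * D') :
    N' = N ∧ D' = D := by
  have hDD' : D ∣ D' := h.symm.dvd_of_dvd_mul_left ⟨N', by rw [← heq, mul_comm]⟩
  have hD'D : D' ∣ D := h'.symm.dvd_of_dvd_mul_left ⟨N, by rw [heq, mul_comm]⟩
  obtain rfl : D' = D := eq_of_monic_of_associated hD' hD (associated_of_dvd_dvd hD'D hDD')
  exact ⟨mul_right_cancel₀ hD.ne_zero heq, rfl⟩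

end Domain

section MonicIrreducibles

def monicIrreducibles (K : Type*) [Field K] (d : ℕ) : Set K[X] :=
  {P | P.Monic ∧ Irreducible P ∧ P.natDegree = d}

variable {K : Type*} [Field K] [DecidableEq K] (σ : K[X] ≃ₐ[K] K[X])

theorem mapsTo_normalize_algEquiv (d : ℕ) :
    Set.MapsTo (fun p => normalize (σ p)) (monicIrreducibles K d) (monicIrreducibles K d) := by
  rintro p ⟨-, hirr, hdeg⟩
  have hσp : Irreducible (σ p) := hirr.map σ
  exact ⟨monic_normalize hσp.ne_zero, (normalize_associated _).symm.irreducible hσp,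
    by rw [natDegree_eq_of_degree_eq degree_normalize, natDegree_algEquiv, hdeg]⟩

theorem normalize_algEquiv_symm_normalize_algEquiv {p : K[X]} (hp : p.Monic) :
    normalize (σ.symm (normalize (σ p))) = p := by
  rw [normalize_eq_normalize_iff_associated.mpr ((normalize_associated (σ p)).map σ.symm),
    σ.symm_apply_apply, hp.normalize_eq_self]

theorem bijOn_normalize_algEquiv (d : ℕ) :
    Set.BijOn (fun p => normalize (σ p)) (monicIrreducibles K d) (monicIrreducibles K d) :=
  Set.InvOn.bijOn
    ⟨fun _ hp => normalize_algEquiv_symm_normalize_algEquiv σ hp.1,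
      fun _ hp => normalize_algEquiv_symm_normalize_algEquiv σ.symm hp.1⟩
    (mapsTo_normalize_algEquiv σ d) (mapsTo_normalize_algEquiv σ.symm d)

end MonicIrreducibles

end Polynomial

namespace RatFunc

variable {K : Type*} [Field K] (σ : K[X] ≃ₐ[K] K[X]) {x : RatFunc K}

theorem map_num_mul_denom_of_fieldEquivOfAlgEquiv_eq
    (hx : fieldEquivOfAlgEquiv K (RatFunc K) (RatFunc K) σ x = x) :
    σ x.num * x.denom = x.num * σ x.denom := by
  conv_lhs at hx => rw [← num_div_denom x, map_div₀, fieldEquivOfAlgEquiv_algebraMap,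
    fieldEquivOfAlgEquiv_algebraMap]
  refine ((num_mul_eq_mul_denom_iff ?_).mpr hx.symm).symm
  exact (map_ne_zero_iff σ σ.injective).mpr x.denom_ne_zero

theorem map_num_eq_and_map_denom_eq_of_fieldEquivOfAlgEquiv_eq
    (hσ : (σ Polynomial.X).leadingCoeff = 1)
    (hx : fieldEquivOfAlgEquiv K (RatFunc K) (RatFunc K) σ x = x) :
    σ x.num = x.num ∧ σ x.denom = x.denom := by
  have hcop : IsCoprime (σ x.num) (σ x.denom) := x.isCoprime_num_denom.map σ.toRingHom
  have hmonic : (σ x.denom).Monic := by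
    rw [Monic.def, leadingCoeff_algEquiv, x.monic_denom.leadingCoeff, hσ, one_pow, one_mul]
  exact eq_and_eq_of_mul_eq_mul_of_isCoprime x.isCoprime_num_denom hcop x.monic_denom hmonic
    (map_num_mul_denom_of_fieldEquivOfAlgEquiv_eq σ hx)

theorem leadingCoeff_pow_natDegree_num_eq_of_fieldEquivOfAlgEquiv_eq (hx0 : x ≠ 0)
    (hx : fieldEquivOfAlgEquiv K (RatFunc K) (RatFunc K) σ x = x) :
    (σ Polynomial.X).leadingCoeff ^ x.num.natDegree =
      (σ Polynomial.X).leadingCoeff ^ x.denom.natDegree := by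
  have h := congrArg leadingCoeff (map_num_mul_denom_of_fieldEquivOfAlgEquiv_eq σ hx)
  rw [leadingCoeff_mul, leadingCoeff_mul, leadingCoeff_algEquiv σ x.num,
    leadingCoeff_algEquiv σ x.denom, x.monic_denom.leadingCoeff, one_mul, mul_one] at h
  exact mul_left_cancel₀ (leadingCoeff_ne_zero.mpr (num_ne_zero hx0)) h

theorem intDegree_inv_one_sub_pow (p : K[X]) (k : ℕ) :
    ((1 - algebraMap K[X] (RatFunc K) p ^ k)⁻¹).intDegree = -(k * p.natDegree : ℕ) := by
  rw [intDegree_inv, ← map_pow, ← map_one (algebraMap K[X] (RatFunc K)), ← map_sub,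
    intDegree_polynomial, ← neg_sub, natDegree_neg, ← C_1, natDegree_sub_C, natDegree_pow]

theorem intDegree_finsum_mem_le {ι : Type*} {s : Set ι} {f : ι → RatFunc K} {B : ℤ}
    (hf : ∀ i ∈ s, (f i).intDegree ≤ B) (hs : ∑ᶠ i ∈ s, f i ≠ 0) :
    (∑ᶠ i ∈ s, f i).intDegree ≤ B := by
  -- `intDegree 0 = 0`, so a vanishing partial sum has to be allowed separately.
  refine (finsum_mem_induction (fun y : RatFunc K => y = 0 ∨ y.intDegree ≤ B) (Or.inl rfl) ?_
    fun i hi => Or.inr (hf i hi)).resolve_left hs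
  rintro y z hy hz
  rcases eq_or_ne z 0 with rfl | hz0
  · simpa using hy
  rcases eq_or_ne (y + z) 0 with hyz | hyz
  · exact Or.inl hyz
  rcases hy with rfl | hy
  · simpa using hz
  exact Or.inr ((intDegree_add_le hz0 hyz).trans (max_le hy (hz.resolve_left hz0)))

end RatFunc

namespace FiniteField

variable {K : Type*} [Field K] [Fintype K]

local notation "q" => Fintype.card K

theorem X_pow_card_sub_X_comp_X_add_C_s9 (a : K) :
    (X ^ q - X : K[X]).comp (X + C a) = X ^ q - X := by
  rw [sub_comp, pow_comp, X_comp, ← expand_card, map_add, expand_X, expand_C]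
  ring

theorem X_pow_card_sub_X_dvd_of_forall_eval_eq_zero {h : K[X]} (hh : ∀ a, h.eval a = 0) :
    X ^ q - X ∣ h := by
  rcases eq_or_ne h 0 with rfl | h0
  · exact dvd_zero _
  have hmonic : (X ^ q - X : K[X]).Monic :=
    monic_X_pow_sub (by rw [degree_X]; exact_mod_cast Fintype.one_lt_card)
  have hroots : (X ^ q - X : K[X]).roots ≤ h.roots := by
    rw [roots_X_pow_card_sub_X, Multiset.le_iff_subset Finset.univ.nodup]
    exact fun a _ => (mem_roots h0).mpr (hh a)
  rw [← prod_multiset_X_sub_C_of_monic_of_roots_card_eq hmonic (by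
    rw [roots_X_pow_card_sub_X, X_pow_card_sub_X_natDegree_eq K Fintype.one_lt_card]; rfl)]
  exact (Multiset.prod_dvd_prod_of_le (Multiset.map_le_map hroots)).trans
    (prod_multiset_X_sub_C_dvd h)

theorem card_dvd_natDegree_of_forall_comp_X_add_C_eq {g : K[X]}
    (hg : ∀ a : K, g.comp (X + C a) = g) : q ∣ g.natDegree := by
  induction hn : g.natDegree using Nat.strong_induction_on generalizing g with
  | _ n ih =>
  obtain ⟨m, hm⟩ : X ^ q - X ∣ g - C (g.eval 0) :=
    X_pow_card_sub_X_dvd_of_forall_eval_eq_zero fun a => by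
      simpa [sub_eq_zero] using congrArg (eval 0) (hg a)
  have hθ : (X ^ q - X : K[X]) ≠ 0 := X_pow_card_sub_X_ne_zero K Fintype.one_lt_card
  have hm_inv : ∀ a : K, m.comp (X + C a) = m := fun a => by
    refine mul_left_cancel₀ hθ ?_
    calc (X ^ q - X) * m.comp (X + C a) = ((X ^ q - X) * m).comp (X + C a) := by
          rw [mul_comp, X_pow_card_sub_X_comp_X_add_C_s9]
      _ = (X ^ q - X) * m := by rw [← hm, sub_comp, hg, C_comp]
  rcases eq_or_ne m 0 with rfl | hm0
  · rw [← hn, ← natDegree_sub_C (a := g.eval 0), hm, mul_zero, natDegree_zero]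
    exact dvd_zero q
  have hdeg : n = q + m.natDegree := by
    rw [← hn, ← natDegree_sub_C (a := g.eval 0), hm, natDegree_mul hθ hm0,
      X_pow_card_sub_X_natDegree_eq K Fintype.one_lt_card]
  rw [hdeg]
  exact (Nat.dvd_add_right (dvd_refl q)).mpr
    (ih _ (by have := Fintype.one_lt_card (α := K); omega) hm_inv rfl)

theorem card_sub_one_dvd_sub_of_forall_pow_eq_pow {m n : ℕ} (h : ∀ c : Kˣ, c ^ m = c ^ n) :
    ((q - 1 : ℕ) : ℤ) ∣ (m : ℤ) - n := by
  obtain ⟨ζ, hζ⟩ := IsCyclic.exists_generator (α := Kˣ)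
  have hord : orderOf ζ = q - 1 := by
    rw [orderOf_eq_card_of_forall_mem_zpowers hζ, Nat.card_units, Nat.card_eq_fintype_card]
  rw [← hord, ← Nat.modEq_iff_dvd, ← pow_eq_pow_iff_modEq]
  exact (h ζ).symm

theorem normalize_pow_eq_pow_of_card_sub_one_dvd [DecidableEq K] {k : ℕ} (hk : q - 1 ∣ k)
    (f : K[X]) : normalize f ^ k = f ^ k := by
  rw [normalize_apply, mul_pow, coe_normUnit, ← C_pow, ← Units.val_pow_eq_pow_val,
    (forall_pow_eq_one_iff K k).mpr hk, Units.val_one, C_1, mul_one]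

end FiniteField

namespace RatFunc

open FiniteField

variable {K : Type*} [Field K] [Fintype K]

theorem card_mul_card_sub_one_dvd_intDegree {x : RatFunc K} (hx0 : x ≠ 0)
    (hx : ∀ σ : K[X] ≃ₐ[K] K[X], fieldEquivOfAlgEquiv K (RatFunc K) (RatFunc K) σ x = x) :
    ((Fintype.card K * (Fintype.card K - 1) : ℕ) : ℤ) ∣ x.intDegree := by
  have htrans (a : K) : x.num.comp (Polynomial.X + Polynomial.C a) = x.num ∧
      x.denom.comp (Polynomial.X + Polynomial.C a) = x.denom := by
    simpa [comp_eq_aeval] using map_num_eq_and_map_denom_eq_of_fieldEquivOfAlgEquiv_eq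
      (algEquivAevalXAddC a) (by simp) (hx _)
  have hq : (Fintype.card K : ℤ) ∣ x.intDegree :=
    dvd_sub
      (Int.natCast_dvd_natCast.mpr <|
        card_dvd_natDegree_of_forall_comp_X_add_C_eq fun a => (htrans a).1)
      (Int.natCast_dvd_natCast.mpr <|
        card_dvd_natDegree_of_forall_comp_X_add_C_eq fun a => (htrans a).2)
  have hq1 : ((Fintype.card K - 1 : ℕ) : ℤ) ∣ x.intDegree :=
    card_sub_one_dvd_sub_of_forall_pow_eq_pow fun c => Units.ext <| by
      simpa using leadingCoeff_pow_natDegree_num_eq_of_fieldEquivOfAlgEquiv_eq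
        (algEquivCMulXAddC (c : K) 0) hx0 (hx _)
  have hcop : Nat.Coprime (Fintype.card K) (Fintype.card K - 1) :=
    (Nat.coprime_self_sub_right Fintype.card_pos).mpr (Nat.coprime_one_right _)
  rw [Nat.cast_mul]
  exact (Nat.isCoprime_iff_coprime.mpr hcop).mul_dvd hq hq1

end RatFunc

section Pd

variable {Fq : Type*} [Field Fq]

theorem Pd_eq_finsum_monicIrreducibles (d k : ℕ) :
    Pd Fq d k =
      ∑ᶠ ℘ ∈ monicIrreducibles Fq d, (1 - algebraMap Fq[X] (RatFunc Fq) ℘ ^ k)⁻¹ :=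
  rfl

theorem intDegree_Pd_le {d k : ℕ} (h0 : Pd Fq d k ≠ 0) :
    (Pd Fq d k).intDegree ≤ -(k * d : ℕ) :=
  RatFunc.intDegree_finsum_mem_le
    (fun p hp => by rw [RatFunc.intDegree_inv_one_sub_pow, hp.2.2]) h0

theorem fieldEquivOfAlgEquiv_Pd [Fintype Fq] (σ : Fq[X] ≃ₐ[Fq] Fq[X]) {d k : ℕ}
    (hk : Fintype.card Fq - 1 ∣ k) :
    fieldEquivOfAlgEquiv Fq (RatFunc Fq) (RatFunc Fq) σ (Pd Fq d k) = Pd Fq d k := by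
  classical
  simp only [Pd_eq_finsum_monicIrreducibles, AddEquivClass.map_finsum, map_inv₀, map_sub,
    map_one, map_pow, fieldEquivOfAlgEquiv_algebraMap]
  refine finsum_mem_eq_of_bijOn _ (bijOn_normalize_algEquiv σ d) fun p _ => ?_
  rw [← map_pow (algebraMap Fq[X] (RatFunc Fq)) (normalize (σ p)),
    FiniteField.normalize_pow_eq_pow_of_card_sub_one_dvd hk, map_pow]

end Pd

theorem stmt_9_general (Fq : Type*) [Field Fq] [Fintype Fq] (d k : ℕ)
    (hdvd : Fintype.card Fq - 1 ∣ k) (h0 : Pd Fq d k ≠ 0) :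
    ((Fintype.card Fq * (Fintype.card Fq - 1) : ℕ) : ℤ) ∣ -(Pd Fq d k).intDegree ∧
    ((k * d : ℕ) : ℤ) ≤ -(Pd Fq d k).intDegree :=
  ⟨dvd_neg.mpr (RatFunc.card_mul_card_sub_one_dvd_intDegree h0 fun σ =>
      fieldEquivOfAlgEquiv_Pd σ hdvd),
    le_neg_of_le_neg (intDegree_Pd_le h0)⟩

/-- For `d ≥ 1` and `k` a positive multiple of `q - 1`, if `P_d(k) ≠ 0` then its valuation
at infinity `p_d(k) = -intDegree (P_d(k))` is divisible by `q(q-1)` and is at least `kd`. -/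
theorem stmt_9 (Fq : Type*) [Field Fq] [Fintype Fq] (d k : ℕ) (hd : 1 ≤ d) (hk : 0 < k)
    (hdvd : Fintype.card Fq - 1 ∣ k) (h0 : Pd Fq d k ≠ 0) :
    ((Fintype.card Fq * (Fintype.card Fq - 1) : ℕ) : ℤ) ∣ -(Pd Fq d k).intDegree ∧
    ((k * d : ℕ) : ℤ) ≤ -(Pd Fq d k).intDegree :=
  stmt_9_general Fq d k hdvd h0
end

section
/- Let q > 2 be a prime power and n ≥ 1. Then in F_q(t), the sum over all θ ∈ F_q of (1 - (t+θ)^{q^n - 1})^{-1} equals 0. (Equivalently, P_1(q^n - 1) = 0, since the monic irreducible polynomials of degree 1 in F_q[t] are exactly the t + θ with θ ∈ F_q.) -/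
/-!
For `f = t + θ` the Frobenius gives `f ^ q^n = t ^ q^n + θ`, so `1 - f ^ (q^n - 1) = (t - t ^ q^n) / f`
and every term of the sum is `f / (t - t ^ q^n)`. The numerators add up to `q • t + Σ θ = 0`,
since `q = 0` in `F_q` and `Σ_{θ ∈ F_q} θ = 0` as soon as `q ≠ 2`.
-/

open Finset

section FiniteFieldAlgebra

variable {K A : Type*} [Field K] [Fintype K] [CommRing A] [Algebra K A]

theorem add_algebraMap_pow_card_pow (a : A) (θ : K) (n : ℕ) :
    (a + algebraMap K A θ) ^ (Fintype.card K ^ n) =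
      a ^ (Fintype.card K ^ n) + algebraMap K A θ := by
  have frobenius_pow (x : A) :
      (FiniteField.frobeniusAlgHom K A ^ n) x = x ^ (Fintype.card K ^ n) := by
    rw [AlgHom.coe_pow, FiniteField.coe_frobeniusAlgHom, pow_iterate]
  rw [← frobenius_pow, ← frobenius_pow, map_add, AlgHom.commutes]

theorem FiniteField.sum_univ_eq_zero (hK : Fintype.card K ≠ 2) : ∑ θ : K, θ = 0 := by
  have h1 : 1 < Fintype.card K - 1 := by
    have := Fintype.one_lt_card (α := K)
    omega
  simpa using FiniteField.sum_pow_lt_card_sub_one K 1 h1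

theorem sum_add_algebraMap_eq_zero (hK : Fintype.card K ≠ 2) (a : A) :
    ∑ θ : K, (a + algebraMap K A θ) = 0 := by
  rw [sum_add_distrib, ← map_sum, FiniteField.sum_univ_eq_zero hK, map_zero, add_zero,
    sum_const, card_univ, ← Nat.cast_smul_eq_nsmul K, FiniteField.cast_card_eq_zero, zero_smul]

end FiniteFieldAlgebra

theorem inv_one_sub_pow_pred {L : Type*} [Field L] {f : L} (hf : f ≠ 0) {N : ℕ} (hN : N ≠ 0) :
    (1 - f ^ (N - 1))⁻¹ = f / (f - f ^ N) := by
  rw [← inv_div, sub_div, div_self hf, ← pow_sub_one_mul hN, mul_div_cancel_right₀ _ hf]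

theorem RatFunc.X_add_C_ne_zero {K : Type*} [Field K] (θ : K) : (X + C θ : RatFunc K) ≠ 0 := by
  simpa only [map_add, algebraMap_X, algebraMap_C] using
    algebraMap_ne_zero (Polynomial.X_add_C_ne_zero θ)

theorem stmt_13_general (Fq : Type*) [Field Fq] [Fintype Fq] (hq : 2 < Fintype.card Fq)
    (n : ℕ) :
    ∑ θ : Fq, (1 - (RatFunc.X + RatFunc.C θ) ^ (Fintype.card Fq ^ n - 1))⁻¹ =
      (0 : RatFunc Fq) := by
  set N := Fintype.card Fq ^ n
  have hN : N ≠ 0 := pow_ne_zero n Fintype.card_ne_zero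
  have term_eq (θ : Fq) : (1 - (RatFunc.X + RatFunc.C θ) ^ (N - 1))⁻¹ =
      (RatFunc.X + RatFunc.C θ) / (RatFunc.X - RatFunc.X ^ N) := by
    rw [inv_one_sub_pow_pred (RatFunc.X_add_C_ne_zero θ) hN, ← RatFunc.algebraMap_eq_C,
      add_algebraMap_pow_card_pow, add_sub_add_right_eq_sub]
  rw [sum_congr rfl fun θ _ ↦ term_eq θ, ← sum_div, ← RatFunc.algebraMap_eq_C,
    sum_add_algebraMap_eq_zero hq.ne', zero_div]

/-- (q > 2, n ≥ 1) In `F_q(t)`, `Σ_{θ ∈ F_q} 1/(1 - (t+θ)^{q^n - 1}) = 0`;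
i.e. `P_1(q^n - 1) = 0`. -/
theorem stmt_13 (Fq : Type*) [Field Fq] [Fintype Fq] (hq : 2 < Fintype.card Fq)
    (n : ℕ) (hn : 1 ≤ n) :
    ∑ θ : Fq, (1 - (RatFunc.X + RatFunc.C θ) ^ (Fintype.card Fq ^ n - 1))⁻¹ =
      (0 : RatFunc Fq) :=
  stmt_13_general Fq hq n
end

section
/- Let q = 2^m with m ≥ 3 (so q > 4), and let n ≥ 1. Then P_2(q^n - 1) = 0; that is, in F_q(t) the sum of (1 - ℘^{q^n-1})^{-1} over all monic irreducible polynomials ℘ ∈ F_q[t] of degree 2 equals 0. -/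
open Polynomial Finset

theorem sum_univ_eq_zero_of_two_nsmul_eq_zero {V : Type*} [AddCommGroup V] [Fintype V]
    (h2 : ∀ v : V, 2 • v = 0) (hV : 2 < Fintype.card V) : ∑ v : V, v = 0 := by
  let := AddCommGroup.zmodModule h2
  set d := Module.finrank (ZMod 2) V
  have hcard : Fintype.card V = 2 ^ d := by
    simpa using Module.card_fintype (Module.finBasis (ZMod 2) V)
  have hd : d ≠ 0 := by rintro h; simp [h] at hcard; omega
  let e : V ≃ₗ[ZMod 2] GaloisField 2 d :=
    LinearEquiv.ofFinrankEq _ _ (GaloisField.finrank 2 hd).symm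
  let : Fintype (GaloisField 2 d) := Fintype.ofFinite _
  have hF : 1 < Fintype.card (GaloisField 2 d) - 1 := by
    rw [Fintype.card_eq_nat_card, GaloisField.card 2 d hd, ← hcard]; omega
  calc ∑ v : V, v = e.symm (∑ y, y ^ 1) := by
        simp only [pow_one, map_sum]; exact (e.symm.toEquiv.sum_comp id).symm
    _ = 0 := by rw [FiniteField.sum_pow_lt_card_sub_one _ 1 hF, map_zero]

theorem FiniteField.expand_card_pow {K : Type*} [Field K] [Fintype K] (f : K[X]) (n : ℕ) :
    expand K (Fintype.card K ^ n) f = f ^ Fintype.card K ^ n := by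
  induction n with
  | zero => simp
  | succ n ih => rw [pow_succ, expand_mul, FiniteField.expand_card, map_pow, ih, ← pow_mul]

-- Junk value: if `d = 0` then `1 - x ^ k = 0`, and both sides are `0`.
theorem inv_one_sub_pow_eq_neg_div {F : Type*} [Field F] {x d : F} {k : ℕ} (hx : x ≠ 0)
    (h : x ^ (k + 1) - x = d) : (1 - x ^ k)⁻¹ = -(x / d) := by
  have : 1 - x ^ k = -(d / x) := by
    rw [← h]
    field_simp
    ring
  rw [this, inv_neg, inv_div]

section MonicQuadratic

variable {K : Type*} [Field K]

noncomputable def monicQuadratic (b c : K) : K[X] := X ^ 2 + C b * X + C c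

theorem monicQuadratic_monic (b c : K) : (monicQuadratic b c).Monic := by
  unfold monicQuadratic; monicity!

theorem natDegree_monicQuadratic (b c : K) : (monicQuadratic b c).natDegree = 2 := by
  unfold monicQuadratic; compute_degree!

theorem coeff_one_monicQuadratic (b c : K) : (monicQuadratic b c).coeff 1 = b := by
  simp [monicQuadratic, coeff_X_pow]

theorem coeff_zero_monicQuadratic (b c : K) : (monicQuadratic b c).coeff 0 = c := by
  simp [monicQuadratic]

theorem Polynomial.Monic.eq_monicQuadratic {P : K[X]} (hP : P.Monic) (h2 : P.natDegree = 2) :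
    P = monicQuadratic (P.coeff 1) (P.coeff 0) := by
  conv_lhs => rw [hP.as_sum, h2]
  simp only [monicQuadratic, sum_range_succ, sum_range_zero, pow_zero, pow_one, mul_one, zero_add]
  ring

theorem monicQuadratic_injective :
    Function.Injective (fun bc : K × K ↦ monicQuadratic bc.1 bc.2) := by
  rintro ⟨b, c⟩ ⟨b', c'⟩ h
  have h1 := congrArg (coeff · 1) h
  have h0 := congrArg (coeff · 0) h
  simp only [coeff_one_monicQuadratic, coeff_zero_monicQuadratic] at h1 h0
  exact Prod.ext h1 h0

theorem finsum_mem_monic_natDegree_two [Fintype K] {M : Type*} [AddCommMonoid M]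
    (p : K[X] → Prop) [DecidablePred p] (φ : K[X] → M) :
    ∑ᶠ P ∈ {P : K[X] | P.Monic ∧ p P ∧ P.natDegree = 2}, φ P =
      ∑ b : K, ∑ c ∈ univ.filter (fun c ↦ p (monicQuadratic b c)),
        φ (monicQuadratic b c) := by
  have hset : {P : K[X] | P.Monic ∧ p P ∧ P.natDegree = 2} =
      (fun bc : K × K ↦ monicQuadratic bc.1 bc.2) '' {bc | p (monicQuadratic bc.1 bc.2)} := by
    ext P
    constructor
    · rintro ⟨hP, hp, h2⟩
      exact ⟨(P.coeff 1, P.coeff 0), by rwa [Set.mem_ofPred_eq, ← hP.eq_monicQuadratic h2],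
        (hP.eq_monicQuadratic h2).symm⟩
    · rintro ⟨⟨b, c⟩, hp, rfl⟩
      exact ⟨monicQuadratic_monic b c, hp, natDegree_monicQuadratic b c⟩
  rw [hset, finsum_mem_image monicQuadratic_injective.injOn, ← coe_filter_univ,
    finsum_mem_coe_finset, sum_filter, Fintype.sum_prod_type]
  simp only [sum_filter]

theorem monicQuadratic_pow_card_pow_sub_self [Fintype K] (b c : K) (n : ℕ) :
    monicQuadratic b c ^ Fintype.card K ^ n - monicQuadratic b c =
      (X ^ Fintype.card K ^ n - X) * (X ^ Fintype.card K ^ n + X + C b) := by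
  rw [← FiniteField.expand_card_pow]
  simp only [monicQuadratic, map_add, map_mul, map_pow, expand_X, expand_C]
  ring

section CharTwo

variable [CharP K 2]

@[simps]
def sqAddMulHom (b : K) : K →+ K where
  toFun x := x ^ 2 + b * x
  map_zero' := by simp
  map_add' x y := by linear_combination x * y * CharTwo.two_eq_zero (R := K)

theorem irreducible_monicQuadratic_iff {b c : K} :
    Irreducible (monicQuadratic b c) ↔ c ∉ (sqAddMulHom b).range := by
  rw [irreducible_iff_roots_eq_zero_of_degree_le_three (by rw [natDegree_monicQuadratic])
    (by rw [natDegree_monicQuadratic]; norm_num), Multiset.eq_zero_iff_forall_notMem]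
  simp only [mem_roots (monicQuadratic_monic b c).ne_zero]
  simp [monicQuadratic, CharTwo.add_eq_zero]

theorem not_irreducible_monicQuadratic_zero [Finite K] (c : K) :
    ¬ Irreducible (monicQuadratic 0 c) := by
  obtain ⟨s, rfl⟩ := isSquare_of_charTwo' c
  rw [irreducible_monicQuadratic_iff, not_not]
  exact ⟨s, by rw [sqAddMulHom_apply, zero_mul, add_zero, sq]⟩

theorem card_ker_sqAddMulHom {b : K} (hb : b ≠ 0) : Nat.card (sqAddMulHom b).ker = 2 := by
  have hker : ((sqAddMulHom b).ker : Set K) = {0, b} := by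
    ext x
    simp only [SetLike.mem_coe, AddMonoidHom.mem_ker, sqAddMulHom_apply, Set.mem_insert_iff,
      Set.mem_singleton_iff]
    rw [sq, ← add_mul, mul_eq_zero, CharTwo.add_eq_zero, or_comm]
  rw [← SetLike.coe_sort_coe, hker, Nat.card_coe_set_eq, Set.ncard_pair hb.symm]

theorem card_range_sqAddMulHom_mul_two [Finite K] {b : K} (hb : b ≠ 0) :
    Nat.card (sqAddMulHom b).range * 2 = Nat.card K := by
  rw [← card_ker_sqAddMulHom hb, mul_comm, ← AddSubgroup.index_ker, AddSubgroup.card_mul_index]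

open scoped Classical in
theorem sum_filter_irreducible_monicQuadratic_eq_zero [Fintype K]
    (hK : 8 ∣ Fintype.card K) (b : K) :
    ∑ c ∈ univ.filter (fun c ↦ Irreducible (monicQuadratic b c)), monicQuadratic b c = 0 := by
  by_cases hb : b = 0
  · subst hb
    simp [not_irreducible_monicQuadratic_zero]
  set H := (sqAddMulHom b).range
  set S := univ.filter (fun c ↦ Irreducible (monicQuadratic b c))
  have hS : S = univ.filter (· ∉ H) := filter_congr fun c _ ↦ irreducible_monicQuadratic_iff
  have hH : Nat.card H * 2 = Fintype.card K := by
    rw [card_range_sqAddMulHom_mul_two hb, Nat.card_eq_fintype_card]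
  have hK0 : 0 < Fintype.card K := Fintype.card_pos
  have hsumH : ∑ c ∈ univ.filter (· ∈ H), c = 0 := by
    rw [sum_subtype (p := (· ∈ H)) _ (fun c ↦ by simp) (fun c ↦ c),
      ← AddSubgroup.val_finsetSum,
      sum_univ_eq_zero_of_two_nsmul_eq_zero (fun v ↦ Subtype.ext (CharTwo.two_nsmul _))
        (by rw [← Nat.card_eq_fintype_card]; omega), ZeroMemClass.coe_zero]
  have hsumK : ∑ c : K, c = 0 := by
    simpa using FiniteField.sum_pow_lt_card_sub_one K 1 (by omega)
  have hsumS : ∑ c ∈ S, c = 0 := by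
    rw [hS, ← hsumK, ← sum_filter_add_sum_filter_not univ (· ∈ H), hsumH, zero_add]
  have hcardS : #S = 2 * (Nat.card H / 2) := by
    have := card_filter_add_card_filter_not (s := univ) (· ∈ H)
    rw [card_univ, ← Fintype.card_subtype, ← Nat.card_eq_fintype_card, ← hS] at this
    omega
  calc ∑ c ∈ S, monicQuadratic b c = #S • (X ^ 2 + C b * X) + C (∑ c ∈ S, c) := by
        simp [monicQuadratic, sum_add_distrib, map_sum]
    _ = 0 := by rw [hsumS, hcardS, mul_smul, CharTwo.two_nsmul, map_zero, add_zero]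

end CharTwo

end MonicQuadratic

theorem stmt_14_general (Fq : Type*) [Field Fq] [Fintype Fq] (m : ℕ) (hm : 3 ≤ m)
    (hcard : Fintype.card Fq = 2 ^ m) (n : ℕ) :
    Pd Fq 2 (Fintype.card Fq ^ n - 1) = 0 := by
  classical
  have : CharP Fq 2 := charP_of_card_eq_prime_pow hcard
  have h8 : 8 ∣ Fintype.card Fq := hcard ▸ pow_dvd_pow 2 hm
  have hQ : Fintype.card Fq ^ n - 1 + 1 = Fintype.card Fq ^ n :=
    Nat.sub_add_cancel (Nat.one_le_pow _ _ Fintype.card_pos)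
  rw [Pd, finsum_mem_monic_natDegree_two]
  refine sum_eq_zero fun b _ ↦ ?_
  set ι := algebraMap Fq[X] (RatFunc Fq)
  set D := ι ((X ^ Fintype.card Fq ^ n - X) * (X ^ Fintype.card Fq ^ n + X + C b))
  set S := univ.filter fun c ↦ Irreducible (monicQuadratic b c)
  calc ∑ c ∈ S, (1 - ι (monicQuadratic b c) ^ (Fintype.card Fq ^ n - 1))⁻¹
      = ∑ c ∈ S, -(ι (monicQuadratic b c) / D) := by
        refine sum_congr rfl fun c _ ↦ inv_one_sub_pow_eq_neg_div ?_ ?_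
        · exact (map_ne_zero_iff ι (RatFunc.algebraMap_injective Fq)).mpr
            (monicQuadratic_monic b c).ne_zero
        · rw [hQ, ← map_pow, ← map_sub, monicQuadratic_pow_card_pow_sub_self]
    _ = -(ι (∑ c ∈ S, monicQuadratic b c) / D) := by rw [map_sum, sum_div, sum_neg_distrib]
    _ = 0 := by
      rw [sum_filter_irreducible_monicQuadratic_eq_zero h8, map_zero, zero_div, neg_zero]

/-- (q = 2^m, m ≥ 3, n ≥ 1) `P_2(q^n - 1) = 0` in `F_q(t)`. -/
theorem stmt_14 (Fq : Type*) [Field Fq] [Fintype Fq] (m : ℕ) (hm : 3 ≤ m)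
    (hcard : Fintype.card Fq = 2 ^ m) (n : ℕ) (hn : 1 ≤ n) :
    Pd Fq 2 (Fintype.card Fq ^ n - 1) = 0 :=
  stmt_14_general Fq m hm hcard n
end

section
/- Let q = 4 and let k be an odd positive multiple of 3. Then P_1(k) ≠ 0 with valuation at infinity equal to the smallest multiple of 12 strictly greater than k if and only if k > 3 and (k ≡ 1 mod 4, or k ≡ 3 mod 16, or k ≡ 7 mod 16). Moreover, when this condition holds, the family indexed by all monic irreducible ℘ ∈ F_4[t] with ℘-th member the image of (1-℘^k)^{-1} in K_∞ is summable and its sum P(k) has valuation equal to the smallest multiple of 12 strictly greater than k; in particular P(k) ≠ 0. -/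
noncomputable instance (K : Type*) [Field K] : DecidableEq (RatFunc K) :=
  Classical.decEq _

/-- The canonical embedding of the rational function field `Fq(t)` into its completion
`K_∞ = FqtInfty Fq` at the place at infinity. -/
noncomputable def toInfty {Fq : Type*} [Field Fq] (x : RatFunc Fq) :
    RatFunc.CompletionAtInfty Fq :=
  @UniformSpace.Completion.coe' (RatFunc Fq)
    (RatFunc.inftyValued Fq).toUniformSpace x

/-!
Expanding at infinity, `f ↦ f(1/u)` embeds `F_q(t)` into `F_q((u))` and turns the valuation at
infinity into the `u`-adic valuation. Since `1 - (t + c)^k` becomes `u^(-k) (u^k - (1 + c u)^k)`,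
`P_1(k)(1/u) = u^k Σ_c (u^k - (1 + c u)^k)⁻¹`, and expanding `(1 + c u)^(-k)` and summing the
powers of `c` over `F_q` shows that the coefficient of `u^i` in that sum, for `i < k`, is
`binom(k - 1 + i, i)` if `0 < i` and `(q - 1) ∣ i`, and zero otherwise. For `q = 4` only the parity
of these binomials matters, and it depends only on `k mod 16`, which pins down the valuation of
`P_1(k)` as `k + 3` or `k + 9`; for `k = q - 1 = 3` the sum `P_1(k)` vanishes identically.
Primes of degree at least two contribute terms of valuation at most `exp (-2k)`, which is too
small to change the valuation of the whole (convergent) sum.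
-/

open Polynomial WithZero Filter Topology

theorem WithZero.eq_exp_iff_le_and_exp_sub_one_lt {x : ℤᵐ⁰} {a : ℤ} :
    x = exp a ↔ x ≤ exp a ∧ exp (a - 1) < x := by
  refine ⟨fun h => ⟨h.le, h ▸ exp_lt_exp.2 (sub_one_lt a)⟩, fun ⟨hle, hlt⟩ => ?_⟩
  have hx : x ≠ 0 := ne_zero_of_lt hlt
  rw [← exp_log hx, exp_le_exp] at hle
  rw [← exp_log hx, exp_lt_exp] at hlt
  rw [← exp_log hx, exp_inj]
  lia

theorem FiniteField.sum_pow (K : Type*) [Field K] [Fintype K] (i : ℕ) :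
    ∑ x : K, x ^ i = if Fintype.card K - 1 ∣ i ∧ i ≠ 0 then -1 else 0 := by
  classical
  rcases eq_or_ne i 0 with rfl | hi
  · simp
  rw [Fintype.sum_eq_add_sum_subtype_ne _ 0, zero_pow hi, zero_add,
    ← (unitsEquivNeZero (G₀ := K)).sum_comp]
  simp only [unitsEquivNeZero_apply_coe]
  rw [FiniteField.sum_pow_units]
  simp [hi]

theorem Nat.choose_add_prime_pow_modEq (p : ℕ) [Fact p.Prime] {i r : ℕ} (hi : i < p ^ r)
    (n : ℕ) : (n + p ^ r).choose i ≡ n.choose i [MOD p] := by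
  have key :
      ((X + 1 : (ZMod p)[X]) ^ (n + p ^ r)).coeff i = ((X + 1 : (ZMod p)[X]) ^ n).coeff i := by
    rw [pow_add, add_pow_char_pow, one_pow, mul_add, mul_one, coeff_add, coeff_mul_X_pow',
      if_neg (by omega), zero_add]
  rw [coeff_X_add_one_pow, coeff_X_add_one_pow] at key
  exact (ZMod.natCast_eq_natCast_iff _ _ _).1 key

theorem Nat.choose_modEq_choose_mod_prime_pow (p : ℕ) [Fact p.Prime] {i r : ℕ} (hi : i < p ^ r)
    (n : ℕ) : n.choose i ≡ (n % p ^ r).choose i [MOD p] := by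
  have h (m : ℕ) : (n % p ^ r + p ^ r * m).choose i ≡ (n % p ^ r).choose i [MOD p] := by
    induction m with
    | zero => rfl
    | succ m ih =>
      rw [Nat.mul_succ, ← add_assoc]
      exact (choose_add_prime_pow_modEq p hi _).trans ih
  conv_lhs => rw [← Nat.mod_add_div n (p ^ r)]
  exact h _

theorem Polynomial.finite_setOf_natDegree_le (R : Type*) [Semiring R] [Finite R] (N : ℕ) :
    {p : R[X] | p.natDegree ≤ N}.Finite := by
  have : Finite (degreeLT R (N + 1)) := .of_equiv _ (degreeLTEquiv R (N + 1)).toEquiv.symm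
  refine (Set.toFinite (degreeLT R (N + 1) : Set R[X])).subset fun p hp => ?_
  exact mem_degreeLT.2 ((degree_le_natDegree).trans_lt (by exact_mod_cast Nat.lt_succ_of_le hp))

theorem Polynomial.setOf_monic_irreducible_natDegree_one (K : Type*) [Field K] :
    {P : K[X] | P.Monic ∧ Irreducible P ∧ P.natDegree = 1} = Set.range fun c => X + C c := by
  ext P
  simp only [Set.mem_ofPred_eq, Set.mem_range]
  constructor
  · rintro ⟨hm, -, hd⟩
    exact ⟨P.coeff 0, (hm.eq_X_add_C hd).symm⟩
  · rintro ⟨c, rfl⟩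
    exact ⟨monic_X_add_C c, irreducible_of_degree_eq_one (degree_X_add_C c), natDegree_X_add_C c⟩

namespace PowerSeries
variable {K : Type*} [Field K]

theorem coeff_inv_X_pow_sub {φ : PowerSeries K} (hφ : constantCoeff φ ≠ 0) {k i : ℕ}
    (hi : i < k) : coeff i (X ^ k - φ)⁻¹ = -coeff i φ⁻¹ := by
  set ψ := X ^ k - φ with hψ
  have hc : constantCoeff ψ ≠ 0 := by
    simpa [hψ, zero_pow (show k ≠ 0 by omega)] using hφ
  have key : ψ⁻¹ = (ψ + φ) * (φ⁻¹ * ψ⁻¹) - φ⁻¹ := by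
    linear_combination (-φ⁻¹ : PowerSeries K) * PowerSeries.mul_inv_cancel ψ hc -
      ψ⁻¹ * PowerSeries.mul_inv_cancel φ hφ
  rw [key, hψ, sub_add_cancel, map_sub, coeff_X_pow_mul', if_neg (by omega), zero_sub]

theorem inv_one_add_C_mul_X_pow (c : K) (k : ℕ) :
    ((1 + C c * X) ^ k)⁻¹ = rescale (-c) (invOneSubPow K k).val := by
  have h : (1 + C c * X : PowerSeries K) ^ k = rescale (-c) ((invOneSubPow K k).inv) := by
    rw [invOneSubPow_inv_eq_one_sub_pow, map_pow, map_sub, map_one, rescale_X, map_neg, neg_mul,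
      sub_neg_eq_add]
  rw [PowerSeries.inv_eq_iff_mul_eq_one (by simp), h, ← map_mul, Units.val_inv, map_one]

end PowerSeries

namespace LaurentSeries
variable {K : Type*} [Field K]

theorem valuation_coe_eq_exp_neg_iff (F : PowerSeries K) (n : ℕ) :
    Valued.v (F : K⸨X⸩) = exp (-(n : ℤ)) ↔ F.order = n := by
  rw [WithZero.eq_exp_iff_le_and_exp_sub_one_lt, ← not_le,
    show -(n : ℤ) - 1 = -((n + 1 : ℕ) : ℤ) by push_cast; ring,
    intValuation_le_iff_coeff_lt_eq_zero, intValuation_le_iff_coeff_lt_eq_zero,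
    PowerSeries.order_eq_nat]
  constructor
  · rintro ⟨hlt, hne⟩
    exact ⟨fun h => hne fun i hi => (Nat.lt_succ_iff_lt_or_eq.1 hi).elim (hlt i) (· ▸ h), hlt⟩
  · rintro ⟨hne, hlt⟩
    exact ⟨hlt, fun h => hne (h n n.lt_succ_self)⟩

instance : (Valued.v : Valuation K⸨X⸩ ℤᵐ⁰).IsTrivialOn K where
  eq_one a ha := by
    have : algebraMap K K⸨X⸩ a = ((PowerSeries.C a : PowerSeries K) : K⸨X⸩) := rfl
    rw [this, ← exp_zero, ← neg_zero, ← Nat.cast_zero, valuation_coe_eq_exp_neg_iff]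
    exact PowerSeries.order_zero_of_unit
      (PowerSeries.isUnit_iff_constantCoeff.2 (by simpa using ha.isUnit))

theorem coe_inv {F : PowerSeries K} (hF : PowerSeries.constantCoeff F ≠ 0) :
    ((F⁻¹ : PowerSeries K) : LaurentSeries K) = (F : LaurentSeries K)⁻¹ :=
  eq_inv_of_mul_eq_one_left (by
    rw [← map_mul (HahnSeries.ofPowerSeries ℤ K), PowerSeries.inv_mul_cancel _ hF, map_one])

theorem transcendental_single_neg_one : Transcendental K (HahnSeries.single (-1 : ℤ) (1 : K)) :=
  Valuation.transcendental_of_ne_one (v := Valued.v) K _ (by simp)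
    (by rw [valuation_single_zpow]; simp)

end LaurentSeries

section Valued
variable {R Γ₀ : Type*} [Ring R] [LinearOrderedCommGroupWithZero Γ₀] [Valued R Γ₀]

theorem Valued.isClosed_setOf_v_le (δ : Γ₀) : IsClosed {x : R | Valued.v x ≤ δ} := by
  refine isOpen_compl_iff.1 (isOpen_iff_mem_nhds.2 fun x hx => ?_)
  replace hx : δ < Valued.v x := not_le.1 hx
  refine mem_of_superset (Valued.locally_const (ne_zero_of_lt hx)) fun y hy => ?_
  have hy : Valued.v y = Valued.v x := hy
  exact not_le.2 (hy ▸ hx)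

theorem Valued.v_le_of_hasSum {ι : Type*} {f : ι → R} {S : R} (hS : HasSum f S) {δ : Γ₀}
    (hf : ∀ i, Valued.v (f i) ≤ δ) : Valued.v S ≤ δ :=
  (Valued.isClosed_setOf_v_le δ).mem_of_tendsto hS
    (Eventually.of_forall fun _ => Valuation.map_sum_le _ fun i _ => hf i)

theorem Valued.tendsto_nhds_zero_of_forall_v_lt {ι : Type*} {f : ι → R} {l : Filter ι}
    (h : ∀ γ : Γ₀, γ ≠ 0 → ∀ᶠ i in l, Valued.v (f i) < γ) : Tendsto f l (𝓝 0) := by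
  refine (Valued.hasBasis_nhds_zero R Γ₀).tendsto_right_iff.2 fun γ _ => ?_
  filter_upwards [h _ ((_root_.map_ne_zero MonoidWithZeroHom.ValueGroup₀.embedding).2 γ.ne_zero)]
    with i hi
  exact (Valuation.restrict_lt_iff_lt_embedding _).2 hi

instance Valued.nonarchimedeanAddGroup : NonarchimedeanAddGroup R where
  is_nonarchimedean U hU := by
    obtain ⟨γ, hγ⟩ := Valued.mem_nhds_zero.1 hU
    exact ⟨⟨Valued.v.restrict.ltAddSubgroup γ, Valued.isOpen_ball R γ.1⟩, hγ⟩

end Valued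

namespace RatFunc
variable {K : Type*} [Field K]

/-- `f ↦ f(1/X)`: the Laurent expansion of `f` at infinity. -/
noncomputable def expandAtInfty : RatFunc K →ₐ[K] LaurentSeries K :=
  liftAlgHom (Polynomial.aeval (HahnSeries.single (-1 : ℤ) (1 : K)))
    (nonZeroDivisors_le_comap_nonZeroDivisors_of_injective _
      (transcendental_iff_injective.1 LaurentSeries.transcendental_single_neg_one))

theorem expandAtInfty_algebraMap (p : K[X]) :
    expandAtInfty (algebraMap K[X] (RatFunc K) p) =
      Polynomial.aeval (HahnSeries.single (-1 : ℤ) (1 : K)) p :=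
  liftRingHom_algebraMap _ _ _

theorem valuation_expandAtInfty (f : RatFunc K) :
    Valued.v (expandAtInfty f) = inftyValuation K f := by
  rcases eq_or_ne f 0 with rfl | hf
  · simp
  let w : Valuation (RatFunc K) ℤᵐ⁰ := Valued.v.comap (expandAtInfty (K := K)).toRingHom
  have hw (g : RatFunc K) : w g = Valued.v (expandAtInfty g) := rfl
  have : w.IsTrivialOn K := ⟨fun a ha => by
    rw [hw, AlgHom.commutes]
    exact Valuation.IsTrivialOn.eq_one (v := (Valued.v : Valuation (LaurentSeries K) ℤᵐ⁰)) a ha⟩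
  have hX : w X = exp 1 := by
    rw [hw, ← algebraMap_X, expandAtInfty_algebraMap, aeval_X, LaurentSeries.valuation_single_zpow]
    simp
  rw [← hw, valuation_eq_valuation_X_zpow_intDegree_of_one_lt_valuation_X (v := w)
    (by rw [hX, ← exp_zero, exp_lt_exp]; exact one_pos) hf, hX, ← exp_zsmul, smul_eq_mul, mul_one,
    inftyValuation_apply, inftyValuation_of_nonzero _ hf]

theorem expandAtInfty_inv_one_sub_pow {k : ℕ} (hk : 0 < k) (c : K) :
    expandAtInfty (1 - algebraMap K[X] (RatFunc K) (Polynomial.X + Polynomial.C c) ^ k)⁻¹ =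
      ((PowerSeries.X ^ k * (PowerSeries.X ^ k - (1 + PowerSeries.C c * PowerSeries.X) ^ k)⁻¹ :
        PowerSeries K) : LaurentSeries K) := by
  have hconst : PowerSeries.constantCoeff
      (PowerSeries.X ^ k - (1 + PowerSeries.C c * PowerSeries.X) ^ k : PowerSeries K) ≠ 0 := by
    simp [zero_pow hk.ne']
  rw [map_mul, LaurentSeries.coe_inv hconst, map_inv₀, map_sub, map_one, map_pow,
    expandAtInfty_algebraMap]
  simp only [map_add, map_sub, map_pow, map_mul, map_one, aeval_X, aeval_C, PowerSeries.coe_X,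
    HahnSeries.algebraMap_apply', PowerSeries.algebraMap_apply, Algebra.algebraMap_self,
    RingHom.id_apply]
  have hx : (HahnSeries.single (1 : ℤ) (1 : K)) ≠ 0 := HahnSeries.single_ne_zero one_ne_zero
  rw [show HahnSeries.single (-1 : ℤ) (1 : K) = (HahnSeries.single 1 1)⁻¹ by
    rw [HahnSeries.inv_single, inv_one]]
  generalize HahnSeries.single (1 : ℤ) (1 : K) = x at hx ⊢
  generalize HahnSeries.ofPowerSeries ℤ K (PowerSeries.C c) = a
  have : 1 - (x⁻¹ + a) ^ k = x⁻¹ ^ k * (x ^ k - (1 + a * x) ^ k) := by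
    rw [mul_sub, ← mul_pow, ← mul_pow, inv_mul_cancel₀ hx, one_pow, mul_add, mul_one,
      mul_left_comm, inv_mul_cancel₀ hx, mul_one, add_comm]
  rw [this, mul_inv, inv_pow, inv_inv]

theorem inftyValuation_eq_exp_iff {f : RatFunc K} {n : ℤ} :
    inftyValuation K f = exp n ↔ f ≠ 0 ∧ f.intDegree = n := by
  rcases eq_or_ne f 0 with rfl | hf
  · simpa using (exp_ne_zero (a := n)).symm
  rw [inftyValuation_apply, inftyValuation_of_nonzero _ hf, exp_inj]
  simp [hf]

theorem inftyValuation_inv_one_sub_pow {P : K[X]} (hP : 0 < P.natDegree) {k : ℕ} (hk : 0 < k) :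
    inftyValuation K (1 - algebraMap K[X] (RatFunc K) P ^ k)⁻¹ =
      exp (-(k * P.natDegree : ℤ)) := by
  have hdeg : (1 - P ^ k).natDegree = k * P.natDegree := by
    rw [natDegree_sub_eq_right_of_natDegree_lt, natDegree_pow]
    rw [natDegree_pow, natDegree_one]
    positivity
  rw [← map_one (algebraMap K[X] (RatFunc K)), ← map_pow, ← map_sub, map_inv₀,
    inftyValuation_apply, inftyValuation.polynomial, hdeg]
  · simp
  · exact ne_zero_of_natDegree_gt (n := 0) (by rw [hdeg]; positivity)

instance : CompleteSpace (CompletionAtInfty K) :=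
  @UniformSpace.Completion.completeSpace (RatFunc K) (inftyValued K).toUniformSpace

theorem valued_toInfty (x : RatFunc K) : Valued.v (toInfty x) = inftyValuation K x :=
  @Valued.valuedCompletion_apply (RatFunc K) _ _ _ (inftyValued K) x

theorem toInfty_eq_algebraMap (x : RatFunc K) :
    toInfty x = algebraMap (RatFunc K) (CompletionAtInfty K) x :=
  rfl

end RatFunc

section Pd
variable {Fq : Type*} [Field Fq] [Fintype Fq]

theorem Pd_one_eq_sum (k : ℕ) :
    Pd Fq 1 k = ∑ c : Fq, (1 - algebraMap Fq[X] (RatFunc Fq) (X + C c) ^ k)⁻¹ := by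
  rw [Pd, setOf_monic_irreducible_natDegree_one, finsum_mem_range
    (fun c d h => C_injective (add_left_cancel (a := (X : Fq[X])) h)), finsum_eq_sum_of_fintype]

-- `(t + c)^q = t^q + c` turns every term into `(t + c) / (t - t^q)`.
theorem Pd_one_card_sub_one (hq : Fintype.card Fq ≠ 2) : Pd Fq 1 (Fintype.card Fq - 1) = 0 := by
  set q := Fintype.card Fq
  have hq1 : 1 < q := Fintype.one_lt_card
  let D := algebraMap Fq[X] (RatFunc Fq) (X - X ^ q)
  have hD : D ≠ 0 := RatFunc.algebraMap_ne_zero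
    (sub_ne_zero.2 (sub_ne_zero.1 (FiniteField.X_pow_card_sub_X_ne_zero Fq hq1)).symm)
  have hterm (c : Fq) : (1 - algebraMap Fq[X] (RatFunc Fq) (X + C c) ^ (q - 1))⁻¹ =
      algebraMap Fq[X] (RatFunc Fq) (X + C c) * D⁻¹ := by
    refine inv_eq_of_mul_eq_one_right ?_
    rw [← mul_assoc, mul_inv_eq_one₀ hD, sub_mul, one_mul, ← pow_succ, Nat.sub_add_cancel hq1.le,
      ← map_pow, ← FiniteField.expand_card, ← map_sub, map_add, expand_X, expand_C]
    exact congrArg _ (by ring)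
  have hsum : ∑ c : Fq, (X + C c) = 0 := by
    have hc : ∑ c : Fq, c = 0 := by
      simpa using FiniteField.sum_pow_lt_card_sub_one (K := Fq) 1 (by omega)
    rw [Finset.sum_add_distrib, ← map_sum, hc, map_zero, add_zero, Finset.sum_const,
      Finset.card_univ, nsmul_eq_mul, ← C_eq_natCast, FiniteField.cast_card_eq_zero, C_0, zero_mul]
  rw [Pd_one_eq_sum, Finset.sum_congr rfl fun c _ => hterm c, ← Finset.sum_mul, ← map_sum, hsum,
    map_zero, zero_mul]

variable (Fq) in
/-- `P_1(k)(1/X) / X^k`. -/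
noncomputable def pdOneExpansion (k : ℕ) : PowerSeries Fq :=
  ∑ c : Fq, (PowerSeries.X ^ k - (1 + PowerSeries.C c * PowerSeries.X) ^ k)⁻¹

theorem coeff_pdOneExpansion {k i : ℕ} (hi : i < k) :
    PowerSeries.coeff i (pdOneExpansion Fq k) =
      if Fintype.card Fq - 1 ∣ i ∧ i ≠ 0 then ((k - 1 + i).choose (k - 1) : Fq) else 0 := by
  have hk : 0 < k := by omega
  simp only [pdOneExpansion, map_sum]
  rw [Finset.sum_congr rfl fun c _ => PowerSeries.coeff_inv_X_pow_sub (by simp) hi]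
  simp only [PowerSeries.inv_one_add_C_mul_X_pow, PowerSeries.coeff_rescale,
    PowerSeries.invOneSubPow_val_eq_mk_sub_one_add_choose_of_pos _ _ hk, PowerSeries.coeff_mk,
    Finset.sum_neg_distrib, ← Finset.sum_mul]
  rw [show ∑ c : Fq, (-c) ^ i = ∑ c : Fq, c ^ i from Equiv.sum_comp (Equiv.neg Fq) (· ^ i),
    FiniteField.sum_pow]
  split_ifs <;> simp

theorem expandAtInfty_Pd_one {k : ℕ} (hk : 0 < k) :
    RatFunc.expandAtInfty (Pd Fq 1 k) =
      ((PowerSeries.X ^ k * pdOneExpansion Fq k : PowerSeries Fq) : LaurentSeries Fq) := by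
  rw [Pd_one_eq_sum, map_sum, pdOneExpansion, Finset.mul_sum, map_sum]
  exact Finset.sum_congr rfl fun c _ => RatFunc.expandAtInfty_inv_one_sub_pow hk c

theorem inftyValuation_Pd_one_eq_exp_iff {k : ℕ} (hk : 0 < k) (n : ℕ) :
    RatFunc.inftyValuation Fq (Pd Fq 1 k) = exp (-(k + n : ℤ)) ↔
      (pdOneExpansion Fq k).order = n := by
  rw [← RatFunc.valuation_expandAtInfty, expandAtInfty_Pd_one hk, map_mul, map_mul,
    PowerSeries.coe_pow, LaurentSeries.valuation_X_pow, neg_add, exp_add,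
    mul_right_inj' exp_ne_zero, LaurentSeries.valuation_coe_eq_exp_neg_iff]

theorem order_pdOneExpansion_of_card_eq_four (hcard : Fintype.card Fq = 4) {k : ℕ} (hodd : Odd k)
    (h3 : 3 ∣ k) (hk : 3 < k) :
    (pdOneExpansion Fq k).order = (if k % 4 = 1 then 3 else 9 : ℕ) ↔
      k % 4 = 1 ∨ k % 16 = 3 ∨ k % 16 = 7 := by
  have : CharP Fq 2 := charP_of_card_eq_prime_pow (f := 2) hcard
  have hcoeff {i : ℕ} (hi : i < k) : PowerSeries.coeff i (pdOneExpansion Fq k) ≠ 0 ↔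
      3 ∣ i ∧ i ≠ 0 ∧ (k - 1 + i).choose (k - 1) % 2 = 1 := by
    rw [coeff_pdOneExpansion hi, hcard]
    split_ifs with h
    · simp [h, CharP.cast_eq_zero_iff Fq 2, Nat.two_dvd_ne_zero]
    · simp only [ne_eq, not_true_eq_false, false_iff]
      tauto
  have hpar {i r : ℕ} (hi : i < 2 ^ r) :
      (k - 1 + i).choose (k - 1) % 2 = ((k - 1 + i) % 2 ^ r).choose i % 2 := by
    rw [Nat.choose_symm_add]
    exact Nat.choose_modEq_choose_mod_prime_pow 2 hi _
  have hk2 : k % 2 = 1 := Nat.odd_iff.1 hodd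
  rw [PowerSeries.order_eq_nat]
  split_ifs with h4
  · have c3 : (k - 1 + 3).choose (k - 1) % 2 = 1 := by
      rw [hpar (r := 2) (by norm_num), show (k - 1 + 3) % 2 ^ 2 = 3 by omega]
      rfl
    refine iff_of_true ⟨(hcoeff (by omega)).2 ⟨dvd_refl 3, by norm_num, c3⟩, fun j hj => ?_⟩
      (Or.inl h4)
    by_contra hne
    have := (hcoeff (by omega)).1 hne
    omega
  · have c3 : (k - 1 + 3).choose (k - 1) % 2 = 0 := by
      rw [hpar (r := 2) (by norm_num), show (k - 1 + 3) % 2 ^ 2 = 1 by omega]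
      rfl
    have c6 : (k - 1 + 6).choose (k - 1) % 2 = 0 := by
      rw [hpar (r := 3) (by norm_num)]
      rcases (show (k - 1 + 6) % 2 ^ 3 = 0 ∨ (k - 1 + 6) % 2 ^ 3 = 4 by omega) with h | h <;>
        rw [h] <;> rfl
    have c9 : (k - 1 + 9).choose (k - 1) % 2 = 1 ↔ k % 16 = 3 ∨ k % 16 = 7 := by
      rw [hpar (r := 4) (by norm_num)]
      rcases (show (k - 1 + 9) % 2 ^ 4 = 3 ∨ (k - 1 + 9) % 2 ^ 4 = 7 ∨ (k - 1 + 9) % 2 ^ 4 = 11 ∨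
        (k - 1 + 9) % 2 ^ 4 = 15 by omega) with h | h | h | h <;>
        rw [h] <;> simp [Nat.choose] <;> omega
    have hk9 : 9 < k := by omega
    have hsmall : ∀ j < 9, PowerSeries.coeff j (pdOneExpansion Fq k) = 0 := fun j hj => by
      by_contra hne
      obtain ⟨hj3, hj0, hj⟩ := (hcoeff (by omega)).1 hne
      obtain rfl | rfl : j = 3 ∨ j = 6 := by omega
      · omega
      · omega
    rw [hcoeff hk9, c9]
    simpa [h4] using fun _ => hsmall

end Pd

section Primes
variable {Fq : Type*} [Field Fq] [Fintype Fq] {k : ℕ}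

theorem summable_toInfty_inv_one_sub_pow (hk : 0 < k) :
    Summable fun ℘ : {P : Fq[X] // P.Monic ∧ Irreducible P} =>
      toInfty (1 - algebraMap Fq[X] (RatFunc Fq) ℘.1 ^ k)⁻¹ := by
  refine NonarchimedeanAddGroup.summable_of_tendsto_cofinite_zero
    (Valued.tendsto_nhds_zero_of_forall_v_lt fun γ hγ => ?_)
  rw [eventually_cofinite]
  refine ((finite_setOf_natDegree_le Fq (log γ).natAbs).preimage
    Subtype.val_injective.injOn).subset fun ℘ h℘ => ?_
  by_contra! hdeg
  refine h℘ ?_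
  rw [RatFunc.valued_toInfty, RatFunc.inftyValuation_inv_one_sub_pow ℘.2.2.natDegree_pos hk,
    ← exp_log hγ, exp_lt_exp]
  have : (℘.1.natDegree : ℤ) ≤ k * ℘.1.natDegree := by
    exact_mod_cast Nat.le_mul_of_pos_left _ hk
  replace hdeg : (log γ).natAbs < ℘.1.natDegree := not_le.1 hdeg
  omega

theorem exists_hasSum_toInfty_inv_one_sub_pow {n : ℤ} (hk : 0 < k)
    (hPd : RatFunc.inftyValuation Fq (Pd Fq 1 k) = exp n) (hn : -(2 * k : ℤ) < n) :
    ∃ S : RatFunc.CompletionAtInfty Fq,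
      HasSum (fun ℘ : {P : Fq[X] // P.Monic ∧ Irreducible P} =>
        toInfty (1 - algebraMap Fq[X] (RatFunc Fq) ℘.1 ^ k)⁻¹) S ∧ Valued.v S = exp n ∧ S ≠ 0 := by
  set f := fun ℘ : {P : Fq[X] // P.Monic ∧ Irreducible P} =>
    toInfty (1 - algebraMap Fq[X] (RatFunc Fq) ℘.1 ^ k)⁻¹
  let linear (c : Fq) : {P : Fq[X] // P.Monic ∧ Irreducible P} :=
    ⟨X + C c, monic_X_add_C c, irreducible_of_degree_eq_one (degree_X_add_C c)⟩
  have hlinear : Function.Injective linear := fun c d h =>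
    C_injective (add_left_cancel (a := (X : Fq[X])) (congrArg Subtype.val h))
  have hlin : HasSum (fun ℘ : Set.range linear => f ℘) (toInfty (Pd Fq 1 k)) := by
    refine hlinear.hasSum_range_iff.2 ?_
    convert hasSum_fintype (f ∘ linear)
    rw [Pd_one_eq_sum, RatFunc.toInfty_eq_algebraMap, map_sum]
    rfl
  obtain ⟨T, hT⟩ := (summable_toInfty_inv_one_sub_pow hk).subtype (Set.range linear)ᶜ
  have hvT : Valued.v T ≤ exp (-(2 * k : ℤ)) := by
    refine Valued.v_le_of_hasSum hT fun ⟨⟨P, hmon, hirr⟩, hP⟩ => ?_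
    have hdeg : 2 ≤ P.natDegree := by
      by_contra! h
      have h1 : P.natDegree = 1 := by have := hirr.natDegree_pos; omega
      exact hP ⟨P.coeff 0, Subtype.ext (hmon.eq_X_add_C h1).symm⟩
    rw [Function.comp_apply, RatFunc.valued_toInfty,
      RatFunc.inftyValuation_inv_one_sub_pow hirr.natDegree_pos hk, exp_le_exp, neg_le_neg_iff,
      mul_comm]
    exact_mod_cast Nat.mul_le_mul_left k hdeg
  have hlt : Valued.v T < Valued.v (toInfty (Pd Fq 1 k)) := by
    rw [RatFunc.valued_toInfty, hPd]
    exact hvT.trans_lt (exp_lt_exp.2 hn)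
  have hvS : Valued.v (toInfty (Pd Fq 1 k) + T) = exp n := by
    rw [Valued.v.map_add_eq_of_lt_left hlt, RatFunc.valued_toInfty, hPd]
  exact ⟨_, hlin.add_compl hT, hvS, fun h => exp_ne_zero (by rw [← hvS, h, map_zero])⟩

end Primes

/-- (q = 4, k an odd positive multiple of 3, M the least multiple of 12 with M > k)
`P_1(k) ≠ 0` with valuation at infinity `M` iff `k > 3` and (`k ≡ 1 [MOD 4]`, or
`k ≡ 3 [MOD 16]`, or `k ≡ 7 [MOD 16]`).  Moreover, when this condition holds, the family
`1/(1 - ℘^k)` over all monic irreducibles of `F_4[t]` is summable in `K_∞` and its sum has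
valuation `M` at infinity (`Valued.v S = ofAdd (-M)`); in particular the sum is nonzero. -/
theorem stmt_16 (Fq : Type*) [Field Fq] [Fintype Fq] (hcard : Fintype.card Fq = 4)
    (k : ℕ) (hk0 : 0 < k) (hodd : Odd k) (hdvd : 3 ∣ k)
    (M : ℕ) (hM : IsLeast {m : ℕ | 12 ∣ m ∧ k < m} M) :
    ((Pd Fq 1 k ≠ 0 ∧ -(Pd Fq 1 k).intDegree = (M : ℤ)) ↔
      (3 < k ∧ (k % 4 = 1 ∨ k % 16 = 3 ∨ k % 16 = 7))) ∧
    ((3 < k ∧ (k % 4 = 1 ∨ k % 16 = 3 ∨ k % 16 = 7)) →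
      ∃ S : RatFunc.CompletionAtInfty Fq,
        HasSum (fun ℘ : {P : Polynomial Fq // P.Monic ∧ Irreducible P} =>
          toInfty (1 - algebraMap (Polynomial Fq) (RatFunc Fq) ℘.1 ^ k)⁻¹) S ∧
        Valued.v S = ((Multiplicative.ofAdd (-(M : ℤ)) :
          Multiplicative ℤ) : WithZero (Multiplicative ℤ)) ∧
        S ≠ 0) := by
  have hk2 : k % 2 = 1 := Nat.odd_iff.1 hodd
  have hM' : M = k + if k % 4 = 1 then 3 else 9 :=
    hM.unique ⟨⟨by split_ifs <;> omega, by split_ifs <;> omega⟩,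
      fun m ⟨_, _⟩ => by split_ifs <;> omega⟩
  have hval : (Pd Fq 1 k ≠ 0 ∧ -(Pd Fq 1 k).intDegree = (M : ℤ)) ↔
      RatFunc.inftyValuation Fq (Pd Fq 1 k) = exp (-(M : ℤ)) := by
    rw [RatFunc.inftyValuation_eq_exp_iff, neg_eq_iff_eq_neg]
  have part1 : (Pd Fq 1 k ≠ 0 ∧ -(Pd Fq 1 k).intDegree = (M : ℤ)) ↔
      (3 < k ∧ (k % 4 = 1 ∨ k % 16 = 3 ∨ k % 16 = 7)) := by
    rcases eq_or_ne k 3 with rfl | hk3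
    · have hPd : Pd Fq 1 3 = 0 := by
        simpa [hcard] using Pd_one_card_sub_one (Fq := Fq) (by omega)
      simp [hPd]
    rw [hval, hM', Nat.cast_add, inftyValuation_Pd_one_eq_exp_iff hk0,
      order_pdOneExpansion_of_card_eq_four hcard hodd hdvd (by omega), and_iff_right (by omega)]
  refine ⟨part1, fun hcond => ?_⟩
  exact exists_hasSum_toInfty_inv_one_sub_pow hk0 (hval.1 (part1.2 hcond))
    (by split_ifs at hM' <;> omega)
end

section
/- Let q = p^m be a prime power with m ≥ 2 (so q is not prime), let n ≥ 1, and let H ∈ ℤ[u] be the unique polynomial with p·H(u) = (1-u^p) - (1-u)^p. Then in F_q(t), the sum over all θ ∈ F_q of H((t+θ)^{-(q^n-1)}) / (1-(t+θ)^{-(q^n-1)})^p equals 0 (H evaluated after reducing its coefficients modulo p); that is, the degree-1 sum G_1(q^n-1) = Σ_{deg ℘ = 1} G_p(1/℘^{q^n-1}) vanishes. -/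
/-!
Put `f = t + θ` and `Q = q ^ n`. As `x ↦ x ^ q` is an `F_q`-algebra endomorphism,
`f ^ Q = t ^ Q + θ`, so the argument `f⁻¹ ^ (Q - 1)` is `f / f ^ Q` and
`1 - f / f ^ Q = (t ^ Q - t) / f ^ Q`. Homogenizing `H` in degree `p` turns the `θ`-summand into
`H^hom(t + θ, t ^ Q + θ) / (t ^ Q - t) ^ p`: the denominator does not depend on `θ` and the
numerator is a polynomial of degree at most `p` in `θ`. Because `m ≥ 2` we have `p < q - 1`, and
`∑ θ, θ ^ k = 0` for `k < q - 1`, so the sum vanishes.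
-/

open Polynomial Finset

namespace FiniteField

variable {K : Type*} [Field K] [Fintype K] {R : Type*} [CommRing R] [Algebra K R]

theorem sum_eval_algebraMap_eq_zero {P : R[X]} (hP : P.natDegree < Fintype.card K - 1) :
    ∑ θ : K, P.eval (algebraMap K R θ) = 0 := by
  simp_rw [eval_eq_sum_range, sum_comm (γ := K), ← mul_sum, ← map_pow, ← map_sum]
  refine sum_eq_zero fun k hk => ?_
  rw [sum_pow_lt_card_sub_one K k (by rw [mem_range] at hk; omega), map_zero, mul_zero]

theorem sum_prod_add_algebraMap_pow_eq_zero {σ : Type*} (s : Finset σ) (A : σ → R) (e : σ → ℕ)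
    (he : ∑ i ∈ s, e i < Fintype.card K - 1) :
    ∑ θ : K, ∏ i ∈ s, (A i + algebraMap K R θ) ^ e i = 0 := by
  have hdeg : (∏ i ∈ s, (C (A i) + X) ^ e i).natDegree ≤ ∑ i ∈ s, e i :=
    (natDegree_prod_le _ _).trans <| sum_le_sum fun _ _ =>
      natDegree_pow_le_of_le _ (by compute_degree) |>.trans (mul_one _).le
  simpa [eval_prod] using sum_eval_algebraMap_eq_zero (K := K) (hdeg.trans_lt he)

theorem sum_aeval_add_algebraMap_eq_zero {σ : Type*} [Fintype σ] {G : MvPolynomial σ K}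
    (hG : G.totalDegree < Fintype.card K - 1) (A : σ → R) :
    ∑ θ : K, MvPolynomial.aeval (fun i => A i + algebraMap K R θ) G = 0 := by
  simp_rw [MvPolynomial.aeval_def, MvPolynomial.eval₂_eq', sum_comm (γ := K), ← mul_sum]
  refine sum_eq_zero fun d hd => ?_
  rw [sum_prod_add_algebraMap_pow_eq_zero, mul_zero]
  have := MvPolynomial.le_totalDegree hd
  rw [Finsupp.sum_fintype _ _ (by simp)] at this
  omega

theorem add_algebraMap_pow_card_pow (a : R) (θ : K) (n : ℕ) :
    (a + algebraMap K R θ) ^ Fintype.card K ^ n = a ^ Fintype.card K ^ n + algebraMap K R θ := by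
  induction n with
  | zero => simp
  | succ n ih =>
    rw [pow_succ, pow_mul, ih, pow_mul]
    have h := map_add (frobeniusAlgHom K R) (a ^ Fintype.card K ^ n) (algebraMap K R θ)
    rwa [AlgHom.commutes, coe_frobeniusAlgHom] at h

end FiniteField

theorem Polynomial.aeval_div_div_one_sub_div_pow_eq_aeval_homogenize {K L : Type*}
    [CommSemiring K] [Field L] [Algebra K L] {P : K[X]} {d : ℕ} (hP : P.natDegree ≤ d) {x : L} (hx : x ≠ 0) (y : L) :
    aeval (y / x) P / (1 - y / x) ^ d =
      MvPolynomial.aeval ![y, x] (P.homogenize d) / (x - y) ^ d := by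
  have hPL : (P.map (algebraMap K L)).natDegree ≤ d := natDegree_map_le.trans hP
  rw [MvPolynomial.aeval_def, MvPolynomial.eval₂_eq_eval_map, ← homogenize_map,
    eval_homogenize hPL _ (by simpa using hx), eval_map_algebraMap]
  simp only [Matrix.cons_val_zero, Matrix.cons_val_one]
  rw [one_sub_div hx, div_pow, div_div_eq_mul_div]

theorem stmt_19_general (p m : ℕ) [Fact (Nat.Prime p)] (hm : 2 ≤ m)
    (Fq : Type*) [Field Fq] [Fintype Fq] (hcard : Fintype.card Fq = p ^ m)
    (n : ℕ)
    (H : Polynomial ℤ)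
    (hH : Polynomial.C (p : ℤ) * H = (1 - Polynomial.X ^ p) - (1 - Polynomial.X) ^ p) :
    ∑ θ : Fq,
        (Polynomial.aeval ((RatFunc.X + RatFunc.C θ)⁻¹ ^ (Fintype.card Fq ^ n - 1))
            (H.map (Int.castRingHom Fq)) /
          (1 - (RatFunc.X + RatFunc.C θ)⁻¹ ^ (Fintype.card Fq ^ n - 1)) ^ p) =
      (0 : RatFunc Fq) := by
  have hp := (Fact.out : p.Prime).two_le
  have hp_lt : p < Fintype.card Fq - 1 := by
    have : p ^ 2 ≤ p ^ m := Nat.pow_le_pow_right (by omega) hm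
    have : p + 2 ≤ p ^ 2 := by nlinarith
    omega
  have hH_deg : (H.map (Int.castRingHom Fq)).natDegree ≤ p := by
    refine natDegree_map_le.trans ?_
    rw [← natDegree_C_mul (a := (p : ℤ)) (by exact_mod_cast (Fact.out : p.Prime).ne_zero), hH]
    compute_degree
  set Q := Fintype.card Fq ^ n
  have hsummand (θ : Fq) :
      aeval ((RatFunc.X + RatFunc.C θ)⁻¹ ^ (Q - 1)) (H.map (Int.castRingHom Fq)) /
          (1 - (RatFunc.X + RatFunc.C θ)⁻¹ ^ (Q - 1)) ^ p =
        MvPolynomial.aeval (fun i => ![RatFunc.X, RatFunc.X ^ Q] i + algebraMap Fq _ θ)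
            ((H.map (Int.castRingHom Fq)).homogenize p) / (RatFunc.X ^ Q - RatFunc.X) ^ p := by
    have hf : RatFunc.X + RatFunc.C θ ≠ 0 := by
      rw [← RatFunc.algebraMap_X, ← RatFunc.algebraMap_C, ← map_add]
      exact RatFunc.algebraMap_ne_zero (X_add_C_ne_zero θ)
    set f : RatFunc Fq := RatFunc.X + RatFunc.C θ
    have hfQ : f ^ Q = RatFunc.X ^ Q + RatFunc.C θ := by
      rw [← RatFunc.algebraMap_eq_C]; exact FiniteField.add_algebraMap_pow_card_pow _ _ _
    have hinv : f⁻¹ ^ (Q - 1) = f / f ^ Q := by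
      rw [inv_pow, ← pow_sub_one_mul (by positivity : Q ≠ 0)]; field_simp
    rw [hinv, aeval_div_div_one_sub_div_pow_eq_aeval_homogenize hH_deg (pow_ne_zero _ hf), hfQ,
      show RatFunc.X ^ Q + RatFunc.C θ - f = RatFunc.X ^ Q - RatFunc.X by ring]
    congr 2
    ext i; fin_cases i <;> simp [f, RatFunc.algebraMap_eq_C]
  simp_rw [hsummand, ← sum_div, FiniteField.sum_aeval_add_algebraMap_eq_zero
    ((isHomogeneous_homogenize _).totalDegree_le.trans_lt hp_lt), zero_div]

/-- (q = p^m, p prime, m ≥ 2, n ≥ 1) Let `H ∈ ℤ[u]` be the unique polynomial with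
`p·H(u) = (1 - u^p) - (1 - u)^p`.  Then in `F_q(t)`,
`Σ_{θ ∈ F_q} H((t+θ)^{-(q^n-1)}) / (1 - (t+θ)^{-(q^n-1)})^p = 0` (coefficients of `H`
reduced mod `p`); that is, the degree-1 sum `G_1(q^n - 1)` vanishes. -/
theorem stmt_19 (p m : ℕ) [Fact (Nat.Prime p)] (hm : 2 ≤ m)
    (Fq : Type*) [Field Fq] [Fintype Fq] (hcard : Fintype.card Fq = p ^ m)
    (n : ℕ) (hn : 1 ≤ n)
    (H : Polynomial ℤ)
    (hH : Polynomial.C (p : ℤ) * H = (1 - Polynomial.X ^ p) - (1 - Polynomial.X) ^ p) :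
    ∑ θ : Fq,
        (Polynomial.aeval ((RatFunc.X + RatFunc.C θ)⁻¹ ^ (Fintype.card Fq ^ n - 1))
            (H.map (Int.castRingHom Fq)) /
          (1 - (RatFunc.X + RatFunc.C θ)⁻¹ ^ (Fintype.card Fq ^ n - 1)) ^ p) =
      (0 : RatFunc Fq) :=
  stmt_19_general p m hm Fq hcard n H hH
end
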